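/- arXiv:2405.08675 — 5 statements merged into one kernel-verified Lean document; each statement's English description precedes it below -/
import Mathlib

section
/- Danskin-type differentiability of the optimal value along paths: let Y be a compact metric space, E a metric space, and F : Y × E → ℝ a jointly continuous function. Fix e_0 ∈ E, suppose y ↦ F(y, e_0) has a unique minimizer y(0), and suppose that along a given path {e_ε : ε ∈ [0,1]} ⊆ E with e_ε → e_0: (a) there exists a neighborhood N of y(0) and a function y ↦ D(y) continuous at y(0) such that lim_{(y,ε)→(y(0),0)} ([F(y, e_ε) − F(y, e_0)]/ε − D(y)) = 0 for y ∈ N. Then [min_{y∈Y} F(y, e_ε) − min_{y∈Y} F(y, e_0)]/ε → D(y(0)) as ε → 0. -/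
/-!
Compactness of `Y` makes `F(·, e ε) → F(·, e 0)` uniformly, so minimizers `y ε` of
`F(·, e ε)` converge to the unique minimizer `y0`. Writing `v ε` for the optimal value,
`F (y ε) (e ε) - F (y ε) (e 0) ≤ v ε - v 0 ≤ F y0 (e ε) - F y0 (e 0)`, and after dividing
by `ε > 0` both bounds tend to `D y0`: the joint limit hypothesis is applied along the paths
`ε ↦ (y ε, ε)` and `ε ↦ (y0, ε)`, together with continuity of `D` at `y0`.
-/

open Filter Topology Set

theorem ciInf_eq_of_forall_le {ι α : Type*} [ConditionallyCompleteLinearOrder α] {f : ι → α}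
    {z : ι} (hz : ∀ i, f z ≤ f i) : ⨅ i, f i = f z :=
  haveI : Nonempty ι := ⟨z⟩
  ciInf_eq_of_forall_ge_of_forall_gt_exists_lt hz fun _ hw => ⟨z, hw⟩

theorem Continuous.exists_forall_le_of_compactSpace {Y α : Type*} [TopologicalSpace Y]
    [CompactSpace Y] [Nonempty Y] [LinearOrder α] [TopologicalSpace α] [ClosedIicTopology α]
    {f : Y → α} (hf : Continuous f) : ∃ z, ∀ y, f z ≤ f y :=
  let ⟨z, _, hz⟩ := isCompact_univ.exists_isMinOn univ_nonempty hf.continuousOn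
  ⟨z, fun y => hz (mem_univ y)⟩

theorem tendstoUniformly_comp_of_tendsto {ι Y E β : Type*} [TopologicalSpace Y]
    [CompactSpace Y] [TopologicalSpace E] [UniformSpace β] {F : Y → E → β}
    (hF : Continuous fun q : Y × E => F q.1 q.2) {l : Filter ι} {e : ι → E} {x : E}
    (he : Tendsto e l (𝓝 x)) : TendstoUniformly (fun i y => F y (e i)) (fun y => F y x) l :=
  let G : C(E, C(Y, β)) := ContinuousMap.curry ⟨fun p => F p.2 p.1, hF.comp continuous_swap⟩
  ContinuousMap.tendsto_iff_tendstoUniformly.1 ((G.continuous.tendsto x).comp he)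

theorem tendsto_minimizer_of_tendstoUniformly {ι Y : Type*} [TopologicalSpace Y]
    [CompactSpace Y] {f : ι → Y → ℝ} {g : Y → ℝ} {l : Filter ι} (hfg : TendstoUniformly f g l)
    (hg : Continuous g) {y0 : Y} (hy0 : ∀ y ≠ y0, g y0 < g y) {z : ι → Y}
    (hz : ∀ᶠ i in l, ∀ y, f i (z i) ≤ f i y) : Tendsto z l (𝓝 y0) := by
  rw [tendsto_nhds]
  intro U hU hy0U
  obtain ⟨a, hya, hUa⟩ := hU.isClosed_compl.isCompact.exists_forall_le' hg.continuousOn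
    fun y (hy : y ∉ U) => hy0 y fun h => hy (h ▸ hy0U)
  filter_upwards [hz, Metric.tendstoUniformly_iff.1 hfg ((a - g y0) / 2) (by linarith)]
    with i hzi hfi
  by_contra hzU
  have hza := hUa (z i) hzU
  have hz_close := hfi (z i)
  have hy0_close := hfi y0
  rw [Real.dist_eq, abs_lt] at hz_close hy0_close
  linarith [hzi y0]

theorem tendsto_comp_of_tendsto_sub_nhdsWithin_prod {Y : Type*} [TopologicalSpace Y]
    {φ : Y → ℝ → ℝ} {D : Y → ℝ} {y0 : Y} {N : Set Y} (hN : N ∈ 𝓝 y0) (hD : ContinuousAt D y0)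
    (hφ : Tendsto (fun q : Y × ℝ => φ q.1 q.2 - D q.1) (𝓝[N ×ˢ Ioi 0] (y0, 0)) (𝓝 0))
    {z : ℝ → Y} (hz : Tendsto z (𝓝[>] 0) (𝓝 y0)) :
    Tendsto (fun ε => φ (z ε) ε) (𝓝[>] 0) (𝓝 (D y0)) := by
  have hpath : Tendsto (fun ε => (z ε, ε)) (𝓝[>] 0) (𝓝[N ×ˢ Ioi 0] (y0, 0)) :=
    tendsto_nhdsWithin_iff.2 ⟨hz.prodMk_nhds (tendsto_id.mono_left nhdsWithin_le_nhds),
      by filter_upwards [hz hN, self_mem_nhdsWithin] with ε hzε hε using ⟨hzε, hε⟩⟩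
  simpa using (hφ.comp hpath).add (hD.tendsto.comp hz)

/-- Danskin-type differentiability of the optimal value along paths.
`Y` is a compact metric space, `F` jointly continuous, `y0` the unique minimizer of
`F(·, e 0)`, and along the path `ε ↦ e ε → e 0` the difference quotients
`[F(y, e ε) − F(y, e 0)]/ε` converge to `D y` jointly as `(y,ε) → (y0,0)` on a
neighborhood `N` of `y0`, with `D` continuous at `y0`. Then the difference quotient of
the optimal value converges to `D y0`. -/
theorem stmt11 {Y E : Type*} [MetricSpace Y] [CompactSpace Y] [Nonempty Y]
    [MetricSpace E] (F : Y → E → ℝ)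
    (hF : Continuous fun q : Y × E => F q.1 q.2)
    (e : ℝ → E) (he : Tendsto e (𝓝[>] (0:ℝ)) (𝓝 (e 0)))
    (y0 : Y) (hmin : ∀ y, F y0 (e 0) ≤ F y (e 0))
    (huniq : ∀ y, F y (e 0) = F y0 (e 0) → y = y0)
    (N : Set Y) (hN : N ∈ 𝓝 y0) (D : Y → ℝ) (hD : ContinuousAt D y0)
    (hlim : Tendsto (fun q : Y × ℝ => (F q.1 (e q.2) - F q.1 (e 0)) / q.2 - D q.1)
        (𝓝[N ×ˢ Set.Ioi (0:ℝ)] (y0, 0)) (𝓝 0)) :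
    Tendsto (fun ε => ((⨅ y, F y (e ε)) - ⨅ y, F y (e 0)) / ε)
      (𝓝[>] (0:ℝ)) (𝓝 (D y0)) := by
  have hFx : ∀ x, Continuous fun y => F y x := fun x => hF.comp (.prodMk_left x)
  choose z hz using fun ε => (hFx (e ε)).exists_forall_le_of_compactSpace
  have hz_tendsto : Tendsto z (𝓝[>] 0) (𝓝 y0) :=
    tendsto_minimizer_of_tendstoUniformly (tendstoUniformly_comp_of_tendsto hF he) (hFx _)
      (fun y hy => (hmin y).lt_of_ne fun h => hy (huniq y h.symm)) (.of_forall hz)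
  have hquot {w : ℝ → Y} (hw : Tendsto w (𝓝[>] 0) (𝓝 y0)) :
      Tendsto (fun ε => (F (w ε) (e ε) - F (w ε) (e 0)) / ε) (𝓝[>] 0) (𝓝 (D y0)) :=
    tendsto_comp_of_tendsto_sub_nhdsWithin_prod (φ := fun y ε => (F y (e ε) - F y (e 0)) / ε)
      hN hD hlim hw
  refine tendsto_of_tendsto_of_tendsto_of_le_of_le' (hquot hz_tendsto)
    (hquot tendsto_const_nhds) ?_ ?_
  all_goals
    filter_upwards [self_mem_nhdsWithin] with ε (hε : 0 < ε)
    rw [ciInf_eq_of_forall_le (hz ε), ciInf_eq_of_forall_le hmin]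
  · gcongr
    exact hmin _
  · gcongr
    exact hz ε y0
end

section
/- Let H be a symmetric positive definite d×d real matrix, let g ∈ ℝ^d, and suppose w : [0,1] → ℝ^d, F : ℝ^d × [0,1] → ℝ satisfy: (i) w(ε) minimizes F(·, ε) for each ε; (ii) w(ε) → w(0) as ε → 0; (iii) for every function w̃ : [0,1] → ℝ^d with w̃(ε) → w(0), F(w̃(ε), ε) − F(w(0), ε) = ½ (w̃(ε) − w(0))ᵀ H (w̃(ε) − w(0)) + ε (w̃(ε) − w(0))ᵀ g + o(max{‖w̃(ε) − w(0)‖², ε²}). Then ‖w(ε) − w(0) + ε H⁻¹ g‖ = o(ε) as ε → 0; in particular w(ε) = w(0) − ε H⁻¹ g + o(ε). -/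
open Filter Topology Asymptotics RealInnerProductSpace

noncomputable section

set_option maxHeartbeats 1000000

/-- quantitative M-estimation expansion for an optimal solution map.
`H` is a symmetric positive definite operator on `ℝ^d`, `g ∈ ℝ^d`, `h0 = H⁻¹ g`
(i.e., `H h0 = g`), `w ε` minimizes `F(·, ε)`, `w ε → w 0`, and the second-order
expansion (iii) holds along every function `w̃` converging to `w 0`. Then
`‖w ε − w 0 + ε H⁻¹ g‖ = o(ε)`. -/
theorem stmt12 {d : ℕ}
    (H : EuclideanSpace ℝ (Fin d) →L[ℝ] EuclideanSpace ℝ (Fin d))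
    (hsymm : ∀ v w, ⟪H v, w⟫ = ⟪v, H w⟫)
    (c : ℝ) (hc : 0 < c) (hpos : ∀ v, c * ‖v‖ ^ 2 ≤ ⟪v, H v⟫)
    (g h0 : EuclideanSpace ℝ (Fin d)) (hinv : H h0 = g)
    (w : ℝ → EuclideanSpace ℝ (Fin d)) (F : EuclideanSpace ℝ (Fin d) → ℝ → ℝ)
    (hmin : ∀ ε v, F (w ε) ε ≤ F v ε)
    (hconv : Tendsto w (𝓝[>] (0:ℝ)) (𝓝 (w 0)))
    (hexp : ∀ wt : ℝ → EuclideanSpace ℝ (Fin d),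
        Tendsto wt (𝓝[>] (0:ℝ)) (𝓝 (w 0)) →
        (fun ε => F (wt ε) ε - F (w 0) ε
            - (2⁻¹ * ⟪wt ε - w 0, H (wt ε - w 0)⟫ + ε * ⟪wt ε - w 0, g⟫))
          =o[𝓝[>] (0:ℝ)] fun ε => max (‖wt ε - w 0‖ ^ 2) (ε ^ 2)) :
    (fun ε => w ε - w 0 + ε • h0) =o[𝓝[>] (0:ℝ)] fun ε => ε := by
  -- the competitor
  have hwt : Tendsto (fun ε : ℝ => w 0 - ε • h0) (𝓝[>] (0:ℝ)) (𝓝 (w 0)) := by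
    have h1 : Tendsto (fun ε : ℝ => ε • h0) (𝓝[>] (0:ℝ))
        (𝓝 (0 : EuclideanSpace ℝ (Fin d))) := by
      have := ((continuous_id.smul continuous_const :
          Continuous fun ε : ℝ => ε • h0).tendsto 0).mono_left
        (nhdsWithin_le_nhds (s := Set.Ioi (0:ℝ)))
      simpa only [zero_smul] using
        (show Tendsto (fun ε : ℝ => ε • h0) (𝓝[>] (0:ℝ)) (𝓝 ((0:ℝ) • h0)) from this)
    simpa using tendsto_const_nhds.sub h1
  have hA := hexp w hconv
  have hB := hexp _ hwt
  -- key algebraic identity (completing the square)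
  have key : ∀ ε : ℝ,
      (2⁻¹ * ⟪w ε - w 0, H (w ε - w 0)⟫ + ε * ⟪w ε - w 0, g⟫)
        - (2⁻¹ * ⟪(w 0 - ε • h0) - w 0, H ((w 0 - ε • h0) - w 0)⟫
            + ε * ⟪(w 0 - ε • h0) - w 0, g⟫)
      = 2⁻¹ * ⟪w ε - w 0 + ε • h0, H (w ε - w 0 + ε • h0)⟫ := by
    intro ε
    set u := w ε - w 0 with hu
    have h1 : (w 0 - ε • h0) - w 0 = -(ε • h0) := by abel
    have h2 : ⟪u, H (ε • h0)⟫ = ε * ⟪u, g⟫ := by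
      rw [map_smul, inner_smul_right, hinv]
    have h3 : ⟪(ε:ℝ) • h0, H u⟫ = ε * ⟪u, g⟫ := by
      rw [real_inner_smul_left, ← hsymm, hinv, real_inner_comm]
    have h4 : ⟪(ε:ℝ) • h0, H (ε • h0)⟫ = ε ^ 2 * ⟪h0, g⟫ := by
      rw [map_smul, real_inner_smul_left, inner_smul_right, hinv]
      ring
    have h5 : ⟪(ε:ℝ) • h0, g⟫ = ε * ⟪h0, g⟫ := real_inner_smul_left _ _ _
    rw [h1]
    simp only [map_neg, map_add, inner_neg_left, inner_neg_right, inner_add_left,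
      inner_add_right]
    rw [h2, h3, h4, h5]
    ring
  rw [isLittleO_iff]
  intro C hC
  set K : ℝ := 2 * ‖h0‖ ^ 2 + 1 with hK
  have hKpos : 0 < K := by positivity
  set δ : ℝ := min (c / 16) (c * C ^ 2 / (8 * K)) with hδdef
  have hδ : 0 < δ := lt_min (by positivity) (by positivity)
  have hδ1 : δ ≤ c / 16 := min_le_left _ _
  have hδ2 : δ ≤ c * C ^ 2 / (8 * K) := min_le_right _ _
  clear_value K δ
  have hAev := (isLittleO_iff.mp hA) hδ
  have hBev := (isLittleO_iff.mp hB) hδ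
  filter_upwards [hAev, hBev, self_mem_nhdsWithin] with ε hAe hBe hε
  simp only [Set.mem_Ioi] at hε
  set u := w ε - w 0 with hu
  set r := w ε - w 0 + ε • h0 with hr
  -- quadratic lower bound
  have hq : c * ‖r‖ ^ 2 ≤ ⟪r, H r⟫ := hpos r
  -- minimality
  have hm : F (w ε) ε ≤ F (w 0 - ε • h0) ε := hmin ε _
  -- bounds on remainders
  set Aval := F (w ε) ε - F (w 0) ε - (2⁻¹ * ⟪u, H u⟫ + ε * ⟪u, g⟫) with hAval
  set Bval := F (w 0 - ε • h0) ε - F (w 0) ε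
      - (2⁻¹ * ⟪(w 0 - ε • h0) - w 0, H ((w 0 - ε • h0) - w 0)⟫
          + ε * ⟪(w 0 - ε • h0) - w 0, g⟫) with hBval
  clear_value u r Aval Bval
  have hAabs : |Aval| ≤ δ * max (‖u‖ ^ 2) (ε ^ 2) := by
    have := hAe
    rw [Real.norm_eq_abs, Real.norm_eq_abs] at this
    calc |Aval| ≤ δ * |max (‖u‖ ^ 2) (ε ^ 2)| := this
      _ = δ * max (‖u‖ ^ 2) (ε ^ 2) := by
          rw [abs_of_nonneg (le_max_iff.2 (Or.inl (by positivity)))]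
  have hBmax : max (‖(w 0 - ε • h0) - w 0‖ ^ 2) (ε ^ 2) ≤ K * ε ^ 2 := by
    have h1 : (w 0 - ε • h0) - w 0 = -(ε • h0) := by abel
    rw [h1]
    have : ‖-(ε • h0)‖ ^ 2 = ε ^ 2 * ‖h0‖ ^ 2 := by
      rw [norm_neg, norm_smul, Real.norm_eq_abs, mul_pow, sq_abs]
    rw [this, hK]
    have hε2 : (0:ℝ) ≤ ε ^ 2 := sq_nonneg ε
    apply max_le
    · nlinarith [sq_nonneg ε, sq_nonneg ‖h0‖]
    · nlinarith [sq_nonneg ε, sq_nonneg ‖h0‖, mul_nonneg (sq_nonneg ‖h0‖) (sq_nonneg ε)]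
  have hBabs : |Bval| ≤ δ * (K * ε ^ 2) := by
    have := hBe
    rw [Real.norm_eq_abs, Real.norm_eq_abs] at this
    have h2 : |max (‖(w 0 - ε • h0) - w 0‖ ^ 2) (ε ^ 2)| ≤ K * ε ^ 2 := by
      rwa [abs_of_nonneg (le_max_iff.2 (Or.inr (sq_nonneg ε)))]
    calc |Bval| ≤ δ * |max (‖(w 0 - ε • h0) - w 0‖ ^ 2) (ε ^ 2)| := this
      _ ≤ δ * (K * ε ^ 2) := by exact mul_le_mul_of_nonneg_left h2 hδ.le
  -- ‖u‖² ≤ 2‖r‖² + 2 ε² ‖h0‖²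
  have hun : ‖u‖ ≤ ‖r‖ + ε * ‖h0‖ := by
    have : u = r - ε • h0 := by rw [hr, hu]; abel
    rw [this]
    calc ‖r - ε • h0‖ ≤ ‖r‖ + ‖ε • h0‖ := norm_sub_le _ _
      _ = ‖r‖ + ε * ‖h0‖ := by
          rw [norm_smul, Real.norm_eq_abs, abs_of_pos hε]
  have hu2 : ‖u‖ ^ 2 ≤ 2 * ‖r‖ ^ 2 + 2 * ε ^ 2 * ‖h0‖ ^ 2 := by
    nlinarith [norm_nonneg u, norm_nonneg r, norm_nonneg h0, sq_nonneg (‖r‖ - ε * ‖h0‖)]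
  have hmax : max (‖u‖ ^ 2) (ε ^ 2) ≤ 2 * ‖r‖ ^ 2 + K * ε ^ 2 := by
    rw [hK]
    apply max_le
    · nlinarith [hu2, sq_nonneg ε]
    · nlinarith [sq_nonneg ‖r‖, mul_nonneg (sq_nonneg ‖h0‖) (sq_nonneg ε)]
  -- chain of inequalities
  have hchain : 2⁻¹ * ⟪r, H r⟫ ≤ Bval - Aval := by
    have hk := key ε
    rw [← hr, ← hu] at hk
    linarith [hm, hk, hAval, hBval]
  have hfinal : c * ‖r‖ ^ 2 ≤ 4 * δ * (2 * ‖r‖ ^ 2 + K * ε ^ 2) := by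
    have h1 : Bval - Aval ≤ |Aval| + |Bval| := by
      have := abs_le.mp (le_refl |Aval|)
      have hA' := neg_abs_le Aval
      have hB' := le_abs_self Bval
      linarith
    have h2 : δ * max (‖u‖ ^ 2) (ε ^ 2) ≤ δ * (2 * ‖r‖ ^ 2 + K * ε ^ 2) :=
      mul_le_mul_of_nonneg_left hmax hδ.le
    have h3 : δ * (K * ε ^ 2) ≤ δ * (2 * ‖r‖ ^ 2 + K * ε ^ 2) := by
      apply mul_le_mul_of_nonneg_left _ hδ.le
      nlinarith [sq_nonneg ‖r‖]
    have hA2 : |Aval| ≤ δ * (2 * ‖r‖ ^ 2 + K * ε ^ 2) := hAabs.trans h2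
    have hB2 : |Bval| ≤ δ * (2 * ‖r‖ ^ 2 + K * ε ^ 2) := hBabs.trans h3
    linarith [hq, hchain, h1, hA2, hB2]
  -- conclude
  have hr2 : ‖r‖ ^ 2 ≤ C ^ 2 * ε ^ 2 := by
    have hd2 : δ * (8 * K) ≤ c * C ^ 2 := by
      rw [le_div_iff₀ (by linarith [hKpos] : (0:ℝ) < 8 * K)] at hδ2
      linarith
    nlinarith [hfinal, mul_le_mul_of_nonneg_right hδ1 (sq_nonneg ‖r‖),
      mul_le_mul_of_nonneg_right hd2 (sq_nonneg ε), hc, sq_nonneg ‖r‖, sq_nonneg ε]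
  have : ‖r‖ ≤ C * ε := by
    nlinarith [hr2, norm_nonneg r, mul_nonneg hC.le hε.le, sq_nonneg (‖r‖ - C * ε)]
  calc ‖r‖ ≤ C * ε := this
    _ = C * ‖ε‖ := by rw [Real.norm_eq_abs, abs_of_pos hε]
end
end

section
/- Cross-fitted one-step estimator efficiency: let ψ : M → ℝ be pathwise differentiable at P with efficient influence function f_0 = ψ̇*_P(1). Fix L ≥ 1 and partition {1,…,n} into sets I^{(1)},…,I^{(L)} whose sizes differ by at most 1. For each ℓ, let ĥ^{(ℓ)} and f̂_0^{(ℓ)} be estimates (built from data outside I^{(ℓ)}), and define ψ̂_cf = (1/L) Σ_ℓ [ĥ^{(ℓ)} + (1/|I^{(ℓ)}|) Σ_{i ∈ I^{(ℓ)}} f̂_0^{(ℓ)}(Z_i)]. Define for each ℓ the drift D_n^{(ℓ)} = ∫ (f̂_0^{(ℓ)} − f_0) d(P_n^{(ℓ)} − P) with P_n^{(ℓ)} the empirical distribution on fold ℓ, and the remainder R_n^{(ℓ)} = ĥ^{(ℓ)} + ∫ f̂_0^{(ℓ)} dP − ψ(P). If L is fixed and D_n^{(ℓ)} = o_p(n^{−1/2})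 and R_n^{(ℓ)} = o_p(n^{−1/2}) for all ℓ, then ψ̂_cf − ψ(P) = (1/n) Σ_{i=1}^n f_0(Z_i) + o_p(n^{−1/2}). -/
open MeasureTheory Filter Topology

noncomputable section

def OpSmall {Ω : Type*} [MeasurableSpace Ω] (μ : Measure Ω) (F : ℕ → Ω → ℝ) : Prop :=
  ∀ c > (0:ℝ), Tendsto (fun n => μ {ω | c ≤ |F n ω|}) atTop (𝓝 0)

lemma opSmall_zero {Ω : Type*} [MeasurableSpace Ω] (μ : Measure Ω) :
    OpSmall μ (fun _ _ => (0:ℝ)) := by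
  intro c hc
  have hset : {ω : Ω | c ≤ |(0:ℝ)|} = ∅ := by
    ext ω; simp only [Set.mem_setOf_eq, Set.mem_empty_iff_false, iff_false, not_le, abs_zero]
    exact hc
  simp only [hset, measure_empty]
  exact tendsto_const_nhds

lemma OpSmall.add {Ω : Type*} [MeasurableSpace Ω] {μ : Measure Ω} {A B : ℕ → Ω → ℝ}
    (hA : OpSmall μ A) (hB : OpSmall μ B) :
    OpSmall μ (fun n ω => A n ω + B n ω) := by
  intro c hc
  have hc2 : 0 < c / 2 := by positivity
  have hsub : ∀ n, {ω | c ≤ |A n ω + B n ω|} ⊆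
      {ω | c / 2 ≤ |A n ω|} ∪ {ω | c / 2 ≤ |B n ω|} := by
    intro n ω hω
    by_contra hcon
    simp only [Set.mem_union, Set.mem_setOf_eq, not_or, not_le] at hcon
    have : |A n ω + B n ω| < c := by
      calc |A n ω + B n ω| ≤ |A n ω| + |B n ω| := abs_add_le _ _
        _ < c / 2 + c / 2 := add_lt_add hcon.1 hcon.2
        _ = c := by ring
    exact absurd hω (not_le.mpr this)
  have hle : ∀ n, μ {ω | c ≤ |A n ω + B n ω|} ≤
      μ {ω | c / 2 ≤ |A n ω|} + μ {ω | c / 2 ≤ |B n ω|} := fun n =>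
    le_trans (measure_mono (hsub n)) (measure_union_le _ _)
  have hlim : Tendsto (fun n => μ {ω | c / 2 ≤ |A n ω|} + μ {ω | c / 2 ≤ |B n ω|})
      atTop (𝓝 0) := by
    simpa using (hA (c/2) hc2).add (hB (c/2) hc2)
  exact tendsto_of_tendsto_of_tendsto_of_le_of_le tendsto_const_nhds hlim
    (fun n => zero_le) hle

lemma OpSmall.const_mul {Ω : Type*} [MeasurableSpace Ω] {μ : Measure Ω} {F : ℕ → Ω → ℝ}
    (hF : OpSmall μ F) (k : ℝ) : OpSmall μ (fun n ω => k * F n ω) := by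
  intro c hc
  rcases eq_or_ne k 0 with rfl | hk
  · simpa using opSmall_zero μ c hc
  · have hk' : 0 < |k| := abs_pos.mpr hk
    have := hF (c / |k|) (by positivity)
    have hset : ∀ n, {ω | c ≤ |k * F n ω|} = {ω | c / |k| ≤ |F n ω|} := by
      intro n; ext ω
      simp only [Set.mem_setOf_eq, abs_mul]
      rw [div_le_iff₀ hk', mul_comm]
    simpa only [hset] using this

lemma OpSmall.sum {Ω : Type*} [MeasurableSpace Ω] {μ : Measure Ω} {ι : Type*}
    (s : Finset ι) (F : ι → ℕ → Ω → ℝ) (h : ∀ l ∈ s, OpSmall μ (F l)) :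
    OpSmall μ (fun n ω => ∑ l ∈ s, F l n ω) := by
  classical
  induction s using Finset.induction_on with
  | empty => simpa using opSmall_zero μ
  | @insert a s ha ih =>
      have h1 : OpSmall μ (F a) := h a (Finset.mem_insert_self _ _)
      have h2 : OpSmall μ (fun n ω => ∑ l ∈ s, F l n ω) :=
        ih (fun l hl => h l (Finset.mem_insert_of_mem hl))
      simpa [Finset.sum_insert ha] using h1.add h2

lemma opSmall_weighted {Ω α : Type*} [MeasurableSpace Ω] [MeasurableSpace α]
    (μ : Measure Ω) [IsProbabilityMeasure μ] (P : Measure α) [IsProbabilityMeasure P]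
    (Z : ℕ → Ω → α) (hZmeas : ∀ i, Measurable (Z i))
    (hiid : ProbabilityTheory.iIndepFun Z μ)
    (hdist : ∀ i, μ.map (Z i) = P)
    (g : α → ℝ) (hg : Measurable g) (hg2 : MemLp g 2 P) (hgmean : ∫ a, g a ∂P = 0)
    (w : ℕ → ℕ → ℝ) (C : ℝ)
    (hw : ∀ᶠ (n : ℕ) in atTop, ∀ i ∈ Finset.range n, |w n i| ≤ C / (n:ℝ)^2) :
    OpSmall μ (fun n ω => Real.sqrt n * ∑ i ∈ Finset.range n, w n i * g (Z i ω)) := by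
  intro c hc
  set σ2 := ∫ a, (g a)^2 ∂P with hσ2def
  have hσ2nonneg : 0 ≤ σ2 := integral_nonneg fun a => sq_nonneg _
  have hgZ : ∀ i, MemLp (fun ω => g (Z i ω)) 2 μ := by
    intro i
    have h := (memLp_map_measure_iff (p := 2) (g := g) (f := Z i)
      (by rw [hdist i]; exact hg2.1) (hZmeas i).aemeasurable)
    rw [hdist i] at h
    exact h.mp hg2
  have hint_map : ∀ (i : ℕ) (φ : α → ℝ), Measurable φ →
      ∫ a, φ a ∂P = ∫ ω, φ (Z i ω) ∂μ := by
    intro i φ hφ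
    rw [← hdist i]
    exact integral_map (hZmeas i).aemeasurable hφ.aestronglyMeasurable
  have hmean : ∀ i, ∫ ω, g (Z i ω) ∂μ = 0 := by
    intro i; rw [← hint_map i g hg]; exact hgmean
  have hsq : ∀ i, ∫ ω, (g (Z i ω))^2 ∂μ = σ2 := by
    intro i; rw [← hint_map i (fun a => (g a)^2) (hg.pow_const 2)]
  have hvar : ∀ (w' : ℝ) (i : ℕ),
      ProbabilityTheory.variance (fun ω => w' * g (Z i ω)) μ = w'^2 * σ2 := by
    intro w' i
    rw [ProbabilityTheory.variance_const_mul]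
    congr 1
    rw [ProbabilityTheory.variance_eq_sub (hgZ i)]
    simp only [Pi.pow_apply]
    rw [hsq i, hmean i]
    ring
  obtain ⟨N, hN⟩ := eventually_atTop.mp hw
  set K := C^2 * σ2 / c^2 with hKdef
  have hbound : ∀ᶠ (n : ℕ) in atTop,
      μ {ω | c ≤ |Real.sqrt n * ∑ i ∈ Finset.range n, w n i * g (Z i ω)|}
        ≤ ENNReal.ofReal (K / (n:ℝ)^2) := by
    filter_upwards [eventually_ge_atTop (max N 1)] with n hn
    have hnN : N ≤ n := le_trans (le_max_left _ _) hn
    have hn1 : 1 ≤ n := le_trans (le_max_right _ _) hn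
    have hnR : (0:ℝ) < n := by exact_mod_cast hn1
    have hsqrt : (0:ℝ) < Real.sqrt n := Real.sqrt_pos.mpr hnR
    set S : Ω → ℝ := fun ω => ∑ i ∈ Finset.range n, w n i * g (Z i ω) with hSdef
    have hSfun : (∑ i ∈ Finset.range n, fun ω => w n i * g (Z i ω)) = S := by
      ext ω; simp [hSdef]
    have hSmem : MemLp S 2 μ := by
      rw [← hSfun]
      exact memLp_finset_sum' _ (fun i _ => (hgZ i).const_mul (w n i))
    have hSmean : ∫ ω, S ω ∂μ = 0 := by
      simp only [hSdef]
      rw [integral_finset_sum _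
        (fun i _ => (((hgZ i).const_mul (w n i)).integrable one_le_two))]
      simp [integral_const_mul, hmean]
    have hindep : Set.Pairwise ↑(Finset.range n)
        (fun i j => ProbabilityTheory.IndepFun
          (fun ω => w n i * g (Z i ω)) (fun ω => w n j * g (Z j ω)) μ) := by
      intro i _ j _ hij
      exact (hiid.comp (fun i a => w n i * g a)
        (fun i => measurable_const.mul hg)).indepFun hij
    have hvarS : ProbabilityTheory.variance S μ = ∑ i ∈ Finset.range n, (w n i)^2 * σ2 := by
      rw [← hSfun]
      rw [ProbabilityTheory.IndepFun.variance_sum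
        (fun i _ => (hgZ i).const_mul (w n i)) hindep]
      exact Finset.sum_congr rfl fun i _ => hvar (w n i) i
    have hc' : 0 < c / Real.sqrt n := div_pos hc hsqrt
    have hsetEq : {ω | c ≤ |Real.sqrt n * S ω|}
        = {ω | c / Real.sqrt n ≤ |S ω - ∫ x, S x ∂μ|} := by
      ext ω
      simp only [Set.mem_setOf_eq, hSmean, sub_zero, abs_mul,
        abs_of_nonneg (Real.sqrt_nonneg (n:ℝ))]
      rw [div_le_iff₀ hsqrt, mul_comm]
    have hcheb := ProbabilityTheory.meas_ge_le_variance_div_sq (μ := μ) hSmem hc'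
    have hVar_le : ProbabilityTheory.variance S μ ≤ (n:ℝ) * (C / (n:ℝ)^2)^2 * σ2 := by
      rw [hvarS]
      calc ∑ i ∈ Finset.range n, (w n i)^2 * σ2
          ≤ ∑ _i ∈ Finset.range n, (C / (n:ℝ)^2)^2 * σ2 := by
            refine Finset.sum_le_sum fun i hi => mul_le_mul_of_nonneg_right ?_ hσ2nonneg
            rw [← sq_abs]
            exact pow_le_pow_left₀ (abs_nonneg _) (hN n hnN i hi) 2
        _ = (n:ℝ) * ((C / (n:ℝ)^2)^2 * σ2) := by
            rw [Finset.sum_const, Finset.card_range, nsmul_eq_mul]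
        _ = (n:ℝ) * (C / (n:ℝ)^2)^2 * σ2 := by ring
    have hfinal : ProbabilityTheory.variance S μ / (c / Real.sqrt n)^2 ≤ K / (n:ℝ)^2 := by
      have h1 : (c / Real.sqrt n)^2 = c^2 / n := by
        rw [div_pow, Real.sq_sqrt hnR.le]
      rw [h1]
      have h2 : ((n:ℝ) * (C/(n:ℝ)^2)^2 * σ2) / (c^2 / n) = K / (n:ℝ)^2 := by
        rw [hKdef]
        field_simp
      rw [← h2]
      exact (div_le_div_iff_of_pos_right (by positivity)).mpr hVar_le
    calc μ {ω | c ≤ |Real.sqrt n * S ω|}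
        = μ {ω | c / Real.sqrt n ≤ |S ω - ∫ x, S x ∂μ|} := by rw [hsetEq]
      _ ≤ ENNReal.ofReal (ProbabilityTheory.variance S μ / (c / Real.sqrt n)^2) := hcheb
      _ ≤ ENNReal.ofReal (K / (n:ℝ)^2) := ENNReal.ofReal_le_ofReal hfinal
  have hK : Tendsto (fun n : ℕ => ENNReal.ofReal (K / (n:ℝ)^2)) atTop (𝓝 0) := by
    have h1 : Tendsto (fun n : ℕ => K / (n:ℝ)^2) atTop (𝓝 0) :=
      Tendsto.div_atTop tendsto_const_nhds
        ((tendsto_pow_atTop two_ne_zero).comp tendsto_natCast_atTop_atTop)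
    simpa using ENNReal.tendsto_ofReal h1
  exact tendsto_of_tendsto_of_tendsto_of_le_of_le' tendsto_const_nhds hK
    (Eventually.of_forall fun n => zero_le) hbound


/-- cross-fitted one-step estimator efficiency. With i.i.d. data
`Z₁,…,Zₙ ~ P`, a fixed number `L` of folds partitioning `{0,…,n−1}` into sets of sizes
differing by at most one, fold-wise initial estimates `ĥ^{(ℓ)}` and estimated influence
functions `f̂₀^{(ℓ)}`, the cross-fitted estimator
`ψ̂_cf = L⁻¹ Σ_ℓ [ĥ^{(ℓ)} + |I_ℓ|⁻¹ Σ_{i∈I_ℓ} f̂₀^{(ℓ)}(Zᵢ)]` satisfies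
`√n (ψ̂_cf − ψ(P) − n⁻¹ Σᵢ f₀(Zᵢ)) → 0` in probability provided each fold-wise drift and
remainder is `o_p(n^{−1/2})`. -/
theorem stmt17 {Ω α : Type*} [MeasurableSpace Ω] [MeasurableSpace α]
    (μ : Measure Ω) [IsProbabilityMeasure μ] (P : Measure α) [IsProbabilityMeasure P]
    (Z : ℕ → Ω → α) (hZmeas : ∀ i, Measurable (Z i))
    (hiid : ProbabilityTheory.iIndepFun Z μ)
    (hdist : ∀ i, μ.map (Z i) = P)
    (ψP : ℝ) (f0 : α → ℝ) (hf0 : MemLp f0 2 P) (hf0mean : ∫ a, f0 a ∂P = 0)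
    (L : ℕ) (hL : 1 ≤ L)
    (I : ℕ → Fin L → Finset ℕ)
    (hpart : ∀ n : ℕ,
        (∀ ℓ, I n ℓ ⊆ Finset.range n) ∧
        (∀ ℓ ℓ', ℓ ≠ ℓ' → Disjoint (I n ℓ) (I n ℓ')) ∧
        (Finset.range n = Finset.univ.biUnion (I n)) ∧
        ∀ ℓ ℓ', ((I n ℓ).card : ℤ) - ((I n ℓ').card : ℤ) ≤ 1)
    (hhat : ℕ → Fin L → Ω → ℝ) (fhat : ℕ → Fin L → Ω → α → ℝ)
    (hint : ∀ n ℓ ω, Integrable (fhat n ℓ ω) P)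
    -- fold-wise drift terms are o_p(n^{-1/2})
    (hD : ∀ ℓ, ∀ c > (0:ℝ), Tendsto (fun (n : ℕ) => μ {ω | c ≤ |Real.sqrt n *
        (((((I n ℓ).card : ℝ))⁻¹ * ∑ i ∈ I n ℓ, (fhat n ℓ ω (Z i ω) - f0 (Z i ω)))
          - ∫ a, (fhat n ℓ ω a - f0 a) ∂P)|}) atTop (𝓝 0))
    -- fold-wise remainder terms are o_p(n^{-1/2})
    (hR : ∀ ℓ, ∀ c > (0:ℝ), Tendsto (fun (n : ℕ) => μ {ω | c ≤ |Real.sqrt n *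
        (hhat n ℓ ω + (∫ a, fhat n ℓ ω a ∂P) - ψP)|}) atTop (𝓝 0)) :
    ∀ c > (0:ℝ), Tendsto (fun (n : ℕ) => μ {ω | c ≤ |Real.sqrt n *
        (((L:ℝ)⁻¹ * ∑ ℓ : Fin L, (hhat n ℓ ω
            + (((I n ℓ).card : ℝ))⁻¹ * ∑ i ∈ I n ℓ, fhat n ℓ ω (Z i ω))) - ψP
          - (n:ℝ)⁻¹ * ∑ i ∈ Finset.range n, f0 (Z i ω))|}) atTop (𝓝 0) := by
  classical
  have hf0int : Integrable f0 P := hf0.integrable one_le_two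
  have hLR : (0:ℝ) < L := by exact_mod_cast hL
  have hLne : (L:ℝ) ≠ 0 := ne_of_gt hLR
  -- measurable modification of f0
  set g : α → ℝ := hf0.1.mk f0 with hgdef
  have hgmeas : Measurable g := hf0.1.stronglyMeasurable_mk.measurable
  have hfg : f0 =ᵐ[P] g := hf0.1.ae_eq_mk
  have hg2 : MemLp g 2 P := hf0.ae_eq hfg
  have hgmean : ∫ a, g a ∂P = 0 := by rw [← integral_congr_ae hfg]; exact hf0mean
  -- weights
  set w : ℕ → ℕ → ℝ := fun n i =>
    (∑ ℓ : Fin L, if i ∈ I n ℓ then (L:ℝ)⁻¹ * ((I n ℓ).card : ℝ)⁻¹ else 0) - (n:ℝ)⁻¹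
      with hwdef
  -- weight bound
  have hwbound : ∀ᶠ (n : ℕ) in atTop, ∀ i ∈ Finset.range n,
      |w n i| ≤ (2*(L:ℝ)) / (n:ℝ)^2 := by
    filter_upwards [eventually_ge_atTop (2*L)] with n hn
    intro i hi
    have hnL : (2*(L:ℝ)) ≤ n := by exact_mod_cast hn
    have hnR : (0:ℝ) < n := by
      have : (0:ℝ) < 2*(L:ℝ) := by positivity
      linarith
    obtain ⟨ℓ₀, -, hiℓ₀⟩ := Finset.mem_biUnion.mp (((hpart n).2.2.1) ▸ hi)
    have hwi : w n i = (L:ℝ)⁻¹ * ((I n ℓ₀).card : ℝ)⁻¹ - (n:ℝ)⁻¹ := by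
      rw [hwdef]
      simp only
      congr 1
      rw [Finset.sum_eq_single_of_mem ℓ₀ (Finset.mem_univ _)
        (fun ℓ _ hne => if_neg (fun hmem =>
          (Finset.disjoint_left.mp ((hpart n).2.1 ℓ ℓ₀ hne) hmem) hiℓ₀)), if_pos hiℓ₀]
    set k := (I n ℓ₀).card with hkdef
    have hsumcard : ∑ ℓ : Fin L, (I n ℓ).card = n := by
      have h := (hpart n).2.2.1
      have h2 : (Finset.range n).card = ∑ ℓ : Fin L, (I n ℓ).card := by
        rw [h]
        exact Finset.card_biUnion (fun ℓ _ ℓ' _ hne => (hpart n).2.1 ℓ ℓ' hne)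
      rw [Finset.card_range] at h2
      exact h2.symm
    have hub : ((L:ℤ)) * k ≤ (n:ℤ) + L := by
      have h1 : ∀ ℓ' : Fin L, (k:ℤ) ≤ ((I n ℓ').card : ℤ) + 1 := by
        intro ℓ'; have := (hpart n).2.2.2 ℓ₀ ℓ'; omega
      have h2 : ∑ _ℓ : Fin L, (k:ℤ) ≤ ∑ ℓ' : Fin L, (((I n ℓ').card : ℤ) + 1) :=
        Finset.sum_le_sum (fun ℓ' _ => h1 ℓ')
      simp only [Finset.sum_const, Finset.card_univ, Fintype.card_fin,
        Finset.sum_add_distrib] at h2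
      have h3 : ∑ ℓ' : Fin L, ((I n ℓ').card : ℤ) = (n:ℤ) := by exact_mod_cast hsumcard
      rw [h3] at h2
      simpa [nsmul_eq_mul, mul_comm] using h2
    have hlb : (n:ℤ) - L ≤ (L:ℤ) * k := by
      have h1 : ∀ ℓ' : Fin L, ((I n ℓ').card : ℤ) ≤ (k:ℤ) + 1 := by
        intro ℓ'; have := (hpart n).2.2.2 ℓ' ℓ₀; omega
      have h2 : ∑ ℓ' : Fin L, ((I n ℓ').card : ℤ) ≤ ∑ _ℓ : Fin L, ((k:ℤ) + 1) :=
        Finset.sum_le_sum (fun ℓ' _ => h1 ℓ')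
      have h3 : ∑ ℓ' : Fin L, ((I n ℓ').card : ℤ) = (n:ℤ) := by exact_mod_cast hsumcard
      simp only [h3, Finset.sum_const, Finset.card_univ, Fintype.card_fin] at h2
      have : (n:ℤ) ≤ L * (k + 1) := by simpa [nsmul_eq_mul] using h2
      linarith
    have hubR : (L:ℝ) * k ≤ (n:ℝ) + L := by exact_mod_cast hub
    have hlbR : (n:ℝ) - L ≤ (L:ℝ) * k := by exact_mod_cast hlb
    have hL1 : (1:ℝ) ≤ L := by exact_mod_cast hL
    have hhalf : (n:ℝ)/2 ≤ (L:ℝ) * k := by linarith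
    have hkpos : (0:ℝ) < k := by
      by_contra hk0
      push_neg at hk0
      have : (L:ℝ) * k ≤ 0 := mul_nonpos_of_nonneg_of_nonpos hLR.le hk0
      linarith
    have hkey : (L:ℝ)⁻¹ * (k:ℝ)⁻¹ - (n:ℝ)⁻¹ = ((n:ℝ) - L*k) / (L*k*n) := by
      field_simp
    rw [hwi, hkey, abs_div, abs_of_pos (by positivity : (0:ℝ) < (L:ℝ)*k*n)]
    have habs : |(n:ℝ) - L*k| ≤ L := abs_le.mpr ⟨by linarith, by linarith⟩
    have hden : ((n:ℝ)/2) * n ≤ (L:ℝ)*k*n :=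
      mul_le_mul_of_nonneg_right hhalf hnR.le
    calc |(n:ℝ) - L*k| / ((L:ℝ)*k*n) ≤ (L:ℝ) / (((n:ℝ)/2) * n) :=
          div_le_div₀ hLR.le habs (by positivity) hden
      _ = (2*(L:ℝ)) / (n:ℝ)^2 := by
          field_simp
  -- o_p of the weighted f0 term
  have hCg : OpSmall μ (fun n ω => Real.sqrt n *
      ∑ i ∈ Finset.range n, w n i * g (Z i ω)) :=
    opSmall_weighted μ P Z hZmeas hiid hdist g hgmeas hg2 hgmean w (2*(L:ℝ)) hwbound
  have hZae : ∀ i : ℕ, ∀ᵐ ω ∂μ, f0 (Z i ω) = g (Z i ω) := by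
    intro i
    have h : f0 ∘ (Z i) =ᵐ[μ] g ∘ (Z i) :=
      ae_eq_comp (hZmeas i).aemeasurable (by rw [hdist i]; exact hfg)
    filter_upwards [h] with ω hω
    simpa [Function.comp] using hω
  have hallae : ∀ᵐ ω ∂μ, ∀ i : ℕ, f0 (Z i ω) = g (Z i ω) := ae_all_iff.mpr hZae
  have hCf : OpSmall μ (fun n ω => Real.sqrt n *
      ∑ i ∈ Finset.range n, w n i * f0 (Z i ω)) := by
    intro c hc
    refine (hCg c hc).congr (fun n => measure_congr ?_)
    filter_upwards [hallae] with ω hω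
    have hs : ∑ i ∈ Finset.range n, w n i * g (Z i ω)
        = ∑ i ∈ Finset.range n, w n i * f0 (Z i ω) :=
      Finset.sum_congr rfl fun i _ => by rw [hω i]
    show (c ≤ |Real.sqrt n * ∑ i ∈ Finset.range n, w n i * g (Z i ω)|)
        = (c ≤ |Real.sqrt n * ∑ i ∈ Finset.range n, w n i * f0 (Z i ω)|)
    rw [hs]
  -- o_p of fold-wise terms
  have hA : ∀ ℓ : Fin L, OpSmall μ (fun n ω => Real.sqrt n *
      (hhat n ℓ ω + (∫ a, fhat n ℓ ω a ∂P) - ψP)) := fun ℓ => hR ℓ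
  have hB : ∀ ℓ : Fin L, OpSmall μ (fun n ω => Real.sqrt n *
      (((((I n ℓ).card : ℝ))⁻¹ * ∑ i ∈ I n ℓ, (fhat n ℓ ω (Z i ω) - f0 (Z i ω)))
        - ∫ a, (fhat n ℓ ω a - f0 a) ∂P)) := fun ℓ => hD ℓ
  have hsumop : OpSmall μ (fun n ω => (L:ℝ)⁻¹ * ∑ ℓ : Fin L,
      (Real.sqrt n * (hhat n ℓ ω + (∫ a, fhat n ℓ ω a ∂P) - ψP)
        + Real.sqrt n * (((((I n ℓ).card : ℝ))⁻¹
            * ∑ i ∈ I n ℓ, (fhat n ℓ ω (Z i ω) - f0 (Z i ω)))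
          - ∫ a, (fhat n ℓ ω a - f0 a) ∂P))) :=
    (OpSmall.sum Finset.univ _ (fun ℓ _ => (hA ℓ).add (hB ℓ))).const_mul (L:ℝ)⁻¹
  have htotal := hsumop.add hCf
  -- the algebraic identity
  have hident : ∀ (n : ℕ) (ω : Ω),
      Real.sqrt n * (((L:ℝ)⁻¹ * ∑ ℓ : Fin L, (hhat n ℓ ω
          + (((I n ℓ).card : ℝ))⁻¹ * ∑ i ∈ I n ℓ, fhat n ℓ ω (Z i ω))) - ψP
        - (n:ℝ)⁻¹ * ∑ i ∈ Finset.range n, f0 (Z i ω))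
      = (L:ℝ)⁻¹ * (∑ ℓ : Fin L,
          (Real.sqrt n * (hhat n ℓ ω + (∫ a, fhat n ℓ ω a ∂P) - ψP)
            + Real.sqrt n * (((((I n ℓ).card : ℝ))⁻¹
                * ∑ i ∈ I n ℓ, (fhat n ℓ ω (Z i ω) - f0 (Z i ω)))
              - ∫ a, (fhat n ℓ ω a - f0 a) ∂P)))
        + Real.sqrt n * ∑ i ∈ Finset.range n, w n i * f0 (Z i ω) := by
    intro n ω
    set s := Real.sqrt n with hsdef
    have hAB : ∀ ℓ : Fin L,
        s * (hhat n ℓ ω + (∫ a, fhat n ℓ ω a ∂P) - ψP)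
          + s * (((((I n ℓ).card : ℝ))⁻¹
              * ∑ i ∈ I n ℓ, (fhat n ℓ ω (Z i ω) - f0 (Z i ω)))
            - ∫ a, (fhat n ℓ ω a - f0 a) ∂P)
        = s * (hhat n ℓ ω + (((I n ℓ).card : ℝ))⁻¹ * ∑ i ∈ I n ℓ, fhat n ℓ ω (Z i ω))
          - s * ψP
          - s * ((((I n ℓ).card : ℝ))⁻¹ * ∑ i ∈ I n ℓ, f0 (Z i ω)) := by
      intro ℓ
      rw [integral_sub (hint n ℓ ω) hf0int, hf0mean, Finset.sum_sub_distrib]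
      ring
    have hwsum : ∑ i ∈ Finset.range n, w n i * f0 (Z i ω)
        = (L:ℝ)⁻¹ * (∑ ℓ : Fin L,
            ((((I n ℓ).card : ℝ))⁻¹ * ∑ i ∈ I n ℓ, f0 (Z i ω)))
          - (n:ℝ)⁻¹ * ∑ i ∈ Finset.range n, f0 (Z i ω) := by
      simp only [hwdef, sub_mul, Finset.sum_sub_distrib]
      congr 1
      · rw [Finset.mul_sum]
        simp only [Finset.sum_mul, ite_mul, zero_mul]
        rw [Finset.sum_comm]
        refine Finset.sum_congr rfl fun ℓ _ => ?_
        rw [Finset.sum_ite_mem, Finset.inter_eq_right.mpr ((hpart n).1 ℓ),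
          Finset.mul_sum, Finset.mul_sum]
        refine Finset.sum_congr rfl fun i _ => ?_
        ring
      · rw [Finset.mul_sum]
    have h1 : ∑ ℓ : Fin L,
        (s * (hhat n ℓ ω + (∫ a, fhat n ℓ ω a ∂P) - ψP)
          + s * (((((I n ℓ).card : ℝ))⁻¹
              * ∑ i ∈ I n ℓ, (fhat n ℓ ω (Z i ω) - f0 (Z i ω)))
            - ∫ a, (fhat n ℓ ω a - f0 a) ∂P))
        = s * (∑ ℓ : Fin L, (hhat n ℓ ω
              + (((I n ℓ).card : ℝ))⁻¹ * ∑ i ∈ I n ℓ, fhat n ℓ ω (Z i ω)))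
          - (L:ℝ) * (s * ψP)
          - s * (∑ ℓ : Fin L,
              ((((I n ℓ).card : ℝ))⁻¹ * ∑ i ∈ I n ℓ, f0 (Z i ω))) := by
      rw [Finset.sum_congr rfl (fun ℓ _ => hAB ℓ), Finset.sum_sub_distrib,
        Finset.sum_sub_distrib, Finset.sum_const, Finset.card_univ, Fintype.card_fin,
        ← Finset.mul_sum, ← Finset.mul_sum, nsmul_eq_mul]
    rw [h1, hwsum]
    have hLcancel : (L:ℝ)⁻¹ * (L:ℝ) = 1 := inv_mul_cancel₀ hLne
    linear_combination (s * ψP) * hLcancel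
  -- conclude
  intro c hc
  refine (htotal c hc).congr (fun n => ?_)
  refine congrArg μ ?_
  ext ω
  simp only [Set.mem_setOf_eq]
  rw [hident n ω]


end
end

section
/- Second-order error bound in a von Mises-type expansion: let λ dominate two probability measures P and P_ε on a measurable space with densities p = dP/dλ and p_ε = dP_ε/dλ, and let s ∈ L²(P) with ∫ s dP = 0. Suppose v_ε, v_0 are measurable functions with |v_ε| ≤ c λ-a.e. for a constant c < ∞ and all small ε. Then |∫ (v_ε − v_0) d(P_ε − P)| ≤ ε |∫ (v_ε − v_0) s dP| + 2c H²(P_ε, P) + 2 ‖v_ε − v_0‖_{L²(P)} · ‖p_ε^{1/2} − p^{1/2} − (ε/2) s p^{1/2}‖_{L²(λ)}, where H(P_ε, P) is the Hellinger distance. In particular, if ‖v_ε − v_0‖_{L²(P)} → 0 as ε → 0 and {P_ε} is a quadratic-mean-differentiable path through P with score s (so that ‖p_ε^{1/2} − p^{1/2} − (ε/2) s p^{1/2}‖_{L²(λ)} = o(ε) and H(P_ε, P) = O(ε)), then ∫ (v_ε − v_0) d(P_ε − P) = o(ε). -/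
open MeasureTheory Filter Asymptotics Topology

noncomputable section

lemma aux_int_mul {Z : Type*} [MeasurableSpace Z] {μ : Measure Z} {f g : Z → ℝ}
    (hf : MemLp f 2 μ) (hg : MemLp g 2 μ) : Integrable (fun z => f z * g z) μ := by
  refine Integrable.mono' (g := fun z => (f z ^ 2 + g z ^ 2) / 2)
    ((hf.integrable_sq.add hg.integrable_sq).div_const 2)
    (hf.1.mul hg.1) (Filter.Eventually.of_forall fun z => ?_)
  rw [Real.norm_eq_abs, abs_mul]
  nlinarith [sq_nonneg (|f z| - |g z|), sq_abs (f z), sq_abs (g z)]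

lemma aux_cs {Z : Type*} [MeasurableSpace Z] {μ : Measure Z} {f g : Z → ℝ}
    (hf : MemLp f 2 μ) (hg : MemLp g 2 μ) :
    |∫ z, f z * g z ∂μ| ≤ Real.sqrt (∫ z, f z ^ 2 ∂μ) * Real.sqrt (∫ z, g z ^ 2 ∂μ) := by
  have hpq : Real.HolderConjugate 2 2 := ⟨by norm_num, by norm_num, by norm_num⟩
  have h2 : (ENNReal.ofReal (2:ℝ)) = 2 := by norm_num
  have key := integral_mul_norm_le_Lp_mul_Lq hpq (h2 ▸ hf) (h2 ▸ hg)
  have h1 : |∫ z, f z * g z ∂μ| ≤ ∫ z, ‖f z‖ * ‖g z‖ ∂μ := by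
    rw [← Real.norm_eq_abs]
    refine (norm_integral_le_integral_norm _).trans_eq ?_
    simp [norm_mul]
  refine h1.trans (key.trans_eq ?_)
  rw [Real.sqrt_eq_rpow, Real.sqrt_eq_rpow]
  congr 1 <;> · congr 1; refine integral_congr_ae (Filter.Eventually.of_forall fun z => ?_)
                simp [← Real.rpow_natCast ‖_‖ 2]

lemma key_bound {Z : Type*} [MeasurableSpace Z] (lam : Measure Z) [SigmaFinite lam]
    (P : Measure Z) [IsProbabilityMeasure P] (hP : P ≪ lam)
    (Q : Measure Z) [IsProbabilityMeasure Q] (hQ : Q ≪ lam)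
    (s : Z → ℝ) (hsmeas : Measurable s) (hs : MemLp s 2 P)
    (w : Z → ℝ) (hwmeas : Measurable w) (C : ℝ) (hC : 0 ≤ C)
    (hw : ∀ᵐ z ∂lam, |w z| ≤ C) (ε : ℝ) (hε : 0 < ε) :
    |(∫ z, w z ∂Q) - ∫ z, w z ∂P|
      ≤ ε * |∫ z, w z * s z ∂P|
        + C * ∫ z, (Real.sqrt (Q.rnDeriv lam z).toReal
            - Real.sqrt (P.rnDeriv lam z).toReal) ^ 2 ∂lam
        + 2 * Real.sqrt (∫ z, w z ^ 2 ∂P)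
          * Real.sqrt (∫ z, (Real.sqrt (Q.rnDeriv lam z).toReal
              - Real.sqrt (P.rnDeriv lam z).toReal
              - (ε / 2) * s z * Real.sqrt (P.rnDeriv lam z).toReal) ^ 2 ∂lam) := by
  set p : Z → ℝ := fun z => (P.rnDeriv lam z).toReal with hp_def
  set q : Z → ℝ := fun z => (Q.rnDeriv lam z).toReal with hq_def
  have hp0 : ∀ z, 0 ≤ p z := fun z => ENNReal.toReal_nonneg
  have hq0 : ∀ z, 0 ≤ q z := fun z => ENNReal.toReal_nonneg
  have hpmeas : Measurable p := (Measure.measurable_rnDeriv P lam).ennreal_toReal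
  have hqmeas : Measurable q := (Measure.measurable_rnDeriv Q lam).ennreal_toReal
  have hsqpmeas : Measurable (fun z => Real.sqrt (p z)) :=
    Real.continuous_sqrt.measurable.comp hpmeas
  have hsqqmeas : Measurable (fun z => Real.sqrt (q z)) :=
    Real.continuous_sqrt.measurable.comp hqmeas
  have hp_int : Integrable p lam := Measure.integrable_toReal_rnDeriv
  have hq_int : Integrable q lam := Measure.integrable_toReal_rnDeriv
  have sqp_mem : MemLp (fun z => Real.sqrt (p z)) 2 lam := by
    refine (memLp_two_iff_integrable_sq hsqpmeas.aestronglyMeasurable).mpr ?_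
    exact hp_int.congr (Filter.Eventually.of_forall fun z => (Real.sq_sqrt (hp0 z)).symm)
  have sqq_mem : MemLp (fun z => Real.sqrt (q z)) 2 lam := by
    refine (memLp_two_iff_integrable_sq hsqqmeas.aestronglyMeasurable).mpr ?_
    exact hq_int.congr (Filter.Eventually.of_forall fun z => (Real.sq_sqrt (hq0 z)).symm)
  have δ_mem : MemLp (fun z => Real.sqrt (q z) - Real.sqrt (p z)) 2 lam := sqq_mem.sub sqp_mem
  have δ2_int : Integrable (fun z => (Real.sqrt (q z) - Real.sqrt (p z)) ^ 2) lam :=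
    δ_mem.integrable_sq
  have sp_mem : MemLp (fun z => s z * Real.sqrt (p z)) 2 lam := by
    refine (memLp_two_iff_integrable_sq
      (hsmeas.mul hsqpmeas).aestronglyMeasurable).mpr ?_
    have h1 : Integrable (fun z => p z • (s z ^ 2)) lam :=
      (integrable_rnDeriv_smul_iff hP).mpr hs.integrable_sq
    refine h1.congr (Filter.Eventually.of_forall fun z => ?_)
    simp only [smul_eq_mul, Pi.mul_apply, mul_pow, Real.sq_sqrt (hp0 z)]; ring
  have r_mem : MemLp (fun z => Real.sqrt (q z) - Real.sqrt (p z)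
      - (ε / 2) * s z * Real.sqrt (p z)) 2 lam := by
    have h1 := δ_mem.sub (sp_mem.const_mul (ε / 2))
    refine (memLp_congr_ae (Filter.Eventually.of_forall fun z => ?_)).mp h1
    show Real.sqrt (q z) - Real.sqrt (p z) - ε / 2 * (s z * Real.sqrt (p z)) = _
    ring
  have wp_mem : MemLp (fun z => w z * Real.sqrt (p z)) 2 lam := by
    refine (memLp_two_iff_integrable_sq
      (hwmeas.mul hsqpmeas).aestronglyMeasurable).mpr ?_
    refine Integrable.mono' (g := fun z => C ^ 2 * p z) (hp_int.const_mul _)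
      ((hwmeas.mul hsqpmeas).pow_const 2).aestronglyMeasurable ?_
    filter_upwards [hw] with z hz
    rw [Real.norm_eq_abs]; simp only [Pi.mul_apply]
    have h1 : (w z * Real.sqrt (p z)) ^ 2 = w z ^ 2 * p z := by
      rw [mul_pow, Real.sq_sqrt (hp0 z)]
    rw [h1, abs_of_nonneg (by positivity)]
    have h2 : w z ^ 2 ≤ C ^ 2 := by nlinarith [sq_abs (w z), abs_nonneg (w z)]
    exact mul_le_mul_of_nonneg_right h2 (hp0 z)
  -- integrability of the pieces
  have I0q : Integrable (fun z => w z * q z) lam := by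
    refine Integrable.mono' (g := fun z => C * q z) (hq_int.const_mul _)
      (hwmeas.mul hqmeas).aestronglyMeasurable ?_
    filter_upwards [hw] with z hz
    rw [Real.norm_eq_abs, abs_mul, abs_of_nonneg (hq0 z)]
    exact mul_le_mul_of_nonneg_right hz (hq0 z)
  have I0p : Integrable (fun z => w z * p z) lam := by
    refine Integrable.mono' (g := fun z => C * p z) (hp_int.const_mul _)
      (hwmeas.mul hpmeas).aestronglyMeasurable ?_
    filter_upwards [hw] with z hz
    rw [Real.norm_eq_abs, abs_mul, abs_of_nonneg (hp0 z)]
    exact mul_le_mul_of_nonneg_right hz (hp0 z)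
  have I1 : Integrable (fun z => w z * (Real.sqrt (q z) - Real.sqrt (p z)) ^ 2) lam := by
    refine Integrable.mono' (g := fun z => C * (Real.sqrt (q z) - Real.sqrt (p z)) ^ 2)
      (δ2_int.const_mul _)
      (hwmeas.mul ((hsqqmeas.sub hsqpmeas).pow_const 2)).aestronglyMeasurable ?_
    filter_upwards [hw] with z hz
    rw [Real.norm_eq_abs, abs_mul, abs_of_nonneg (sq_nonneg (Real.sqrt (q z) - Real.sqrt (p z)))]
    exact mul_le_mul_of_nonneg_right hz (sq_nonneg _)
  have I2 : Integrable (fun z => w z * Real.sqrt (p z) * (Real.sqrt (q z) - Real.sqrt (p z)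
      - (ε / 2) * s z * Real.sqrt (p z))) lam := aux_int_mul wp_mem r_mem
  have hws_P : Integrable (fun z => w z * s z) P := by
    refine Integrable.mono' (g := fun z => C * ‖s z‖)
      (((hs.integrable one_le_two).norm).const_mul _)
      (hwmeas.mul hsmeas).aestronglyMeasurable ?_
    filter_upwards [hP.ae_le hw] with z hz
    rw [Real.norm_eq_abs, abs_mul, Real.norm_eq_abs]
    exact mul_le_mul_of_nonneg_right hz (abs_nonneg _)
  have I3 : Integrable (fun z => w z * s z * p z) lam := by
    have h1 : Integrable (fun z => p z • (w z * s z)) lam :=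
      (integrable_rnDeriv_smul_iff hP).mpr hws_P
    refine h1.congr (Filter.Eventually.of_forall fun z => ?_)
    simp only [smul_eq_mul]; ring
  -- change of variables
  have hPeint : ∫ z, w z ∂Q = ∫ z, w z * q z ∂lam := by
    rw [← integral_rnDeriv_smul hQ (f := w)]
    exact integral_congr_ae (Filter.Eventually.of_forall fun z => by
      simp [smul_eq_mul, mul_comm, hq_def])
  have hPint : ∫ z, w z ∂P = ∫ z, w z * p z ∂lam := by
    rw [← integral_rnDeriv_smul hP (f := w)]
    exact integral_congr_ae (Filter.Eventually.of_forall fun z => by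
      simp [smul_eq_mul, mul_comm, hp_def])
  have hwsp : ∫ z, w z * s z * p z ∂lam = ∫ z, w z * s z ∂P := by
    rw [← integral_rnDeriv_smul hP (f := fun z => w z * s z)]
    exact integral_congr_ae (Filter.Eventually.of_forall fun z => by
      simp only [smul_eq_mul]; ring)
  have hwsq : ∫ z, (w z * Real.sqrt (p z)) ^ 2 ∂lam = ∫ z, w z ^ 2 ∂P := by
    rw [← integral_rnDeriv_smul hP (f := fun z => w z ^ 2)]
    refine integral_congr_ae (Filter.Eventually.of_forall fun z => ?_)
    simp only [smul_eq_mul, mul_pow, Real.sq_sqrt (hp0 z)]; ring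
  -- key pointwise identity
  have hkey : ∀ z, w z * q z - w z * p z
      = w z * (Real.sqrt (q z) - Real.sqrt (p z)) ^ 2
        + 2 * (w z * Real.sqrt (p z) * (Real.sqrt (q z) - Real.sqrt (p z)
            - (ε / 2) * s z * Real.sqrt (p z)))
        + ε * (w z * s z * p z) := by
    intro z
    have hq2 : Real.sqrt (q z) ^ 2 = q z := Real.sq_sqrt (hq0 z)
    have hp2 : Real.sqrt (p z) ^ 2 = p z := Real.sq_sqrt (hp0 z)
    linear_combination (- w z) * hq2 + (w z) * hp2 + ε * w z * s z * hp2
  -- splitting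
  have hsplit : (∫ z, w z ∂Q) - ∫ z, w z ∂P
      = (∫ z, w z * (Real.sqrt (q z) - Real.sqrt (p z)) ^ 2 ∂lam)
        + 2 * (∫ z, w z * Real.sqrt (p z) * (Real.sqrt (q z) - Real.sqrt (p z)
            - (ε / 2) * s z * Real.sqrt (p z)) ∂lam)
        + ε * ∫ z, w z * s z ∂P := by
    have I2' : Integrable (fun z => 2 * (w z * Real.sqrt (p z) * (Real.sqrt (q z)
        - Real.sqrt (p z) - (ε / 2) * s z * Real.sqrt (p z)))) lam := I2.const_mul 2
    have I3' : Integrable (fun z => ε * (w z * s z * p z)) lam := I3.const_mul ε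
    have I23 : Integrable (fun z => 2 * (w z * Real.sqrt (p z) * (Real.sqrt (q z)
        - Real.sqrt (p z) - (ε / 2) * s z * Real.sqrt (p z)))
        + ε * (w z * s z * p z)) lam := I2'.add I3'
    calc (∫ z, w z ∂Q) - ∫ z, w z ∂P
        = ∫ z, (w z * q z - w z * p z) ∂lam := by
          rw [hPeint, hPint, integral_sub I0q I0p]
      _ = ∫ z, (w z * (Real.sqrt (q z) - Real.sqrt (p z)) ^ 2
            + (2 * (w z * Real.sqrt (p z) * (Real.sqrt (q z) - Real.sqrt (p z)
              - (ε / 2) * s z * Real.sqrt (p z)))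
            + ε * (w z * s z * p z))) ∂lam := by
          refine integral_congr_ae (Filter.Eventually.of_forall fun z => ?_)
          simp only [hkey z]; ring
      _ = (∫ z, w z * (Real.sqrt (q z) - Real.sqrt (p z)) ^ 2 ∂lam)
          + ((∫ z, 2 * (w z * Real.sqrt (p z) * (Real.sqrt (q z) - Real.sqrt (p z)
              - (ε / 2) * s z * Real.sqrt (p z))) ∂lam)
            + ∫ z, ε * (w z * s z * p z) ∂lam) := by
          rw [integral_add I1 I23, integral_add I2' I3']
      _ = (∫ z, w z * (Real.sqrt (q z) - Real.sqrt (p z)) ^ 2 ∂lam)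
          + 2 * (∫ z, w z * Real.sqrt (p z) * (Real.sqrt (q z) - Real.sqrt (p z)
              - (ε / 2) * s z * Real.sqrt (p z)) ∂lam)
          + ε * ∫ z, w z * s z ∂P := by
          rw [integral_const_mul, integral_const_mul, hwsp]; ring
  rw [hsplit]
  have b1 : |∫ z, w z * (Real.sqrt (q z) - Real.sqrt (p z)) ^ 2 ∂lam|
      ≤ C * ∫ z, (Real.sqrt (q z) - Real.sqrt (p z)) ^ 2 ∂lam := by
    rw [← Real.norm_eq_abs, ← integral_const_mul]
    refine (norm_integral_le_integral_norm _).trans ?_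
    refine integral_mono_ae I1.norm (δ2_int.const_mul C) ?_
    filter_upwards [hw] with z hz
    rw [Real.norm_eq_abs, abs_mul, abs_of_nonneg (sq_nonneg (Real.sqrt (q z) - Real.sqrt (p z)))]
    exact mul_le_mul_of_nonneg_right hz (sq_nonneg _)
  have b2 : |∫ z, w z * Real.sqrt (p z) * (Real.sqrt (q z) - Real.sqrt (p z)
        - (ε / 2) * s z * Real.sqrt (p z)) ∂lam|
      ≤ Real.sqrt (∫ z, w z ^ 2 ∂P)
        * Real.sqrt (∫ z, (Real.sqrt (q z) - Real.sqrt (p z)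
            - (ε / 2) * s z * Real.sqrt (p z)) ^ 2 ∂lam) := by
    have := aux_cs wp_mem r_mem
    rwa [hwsq] at this
  calc |(∫ z, w z * (Real.sqrt (q z) - Real.sqrt (p z)) ^ 2 ∂lam)
        + 2 * (∫ z, w z * Real.sqrt (p z) * (Real.sqrt (q z) - Real.sqrt (p z)
            - (ε / 2) * s z * Real.sqrt (p z)) ∂lam)
        + ε * ∫ z, w z * s z ∂P|
      ≤ |∫ z, w z * (Real.sqrt (q z) - Real.sqrt (p z)) ^ 2 ∂lam|
        + |2 * (∫ z, w z * Real.sqrt (p z) * (Real.sqrt (q z) - Real.sqrt (p z)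
            - (ε / 2) * s z * Real.sqrt (p z)) ∂lam)|
        + |ε * ∫ z, w z * s z ∂P| := by
        exact (abs_add_le _ _).trans (add_le_add_left (abs_add_le _ _) _)
    _ ≤ ε * |∫ z, w z * s z ∂P|
        + C * ∫ z, (Real.sqrt (q z) - Real.sqrt (p z)) ^ 2 ∂lam
        + 2 * Real.sqrt (∫ z, w z ^ 2 ∂P)
          * Real.sqrt (∫ z, (Real.sqrt (q z) - Real.sqrt (p z)
              - (ε / 2) * s z * Real.sqrt (p z)) ^ 2 ∂lam) := by
        rw [abs_mul, abs_mul, abs_of_pos hε, abs_two]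
        have := b2
        nlinarith [b1, b2, abs_nonneg (∫ z, w z * s z ∂P)]


/-- second-order error bound in a von Mises-type expansion. With densities
`p = dP/dλ`, `p_ε = dP_ε/dλ`, a centered score `s ∈ L²(P)`, and `|v_ε| ≤ c` λ-a.e., the
stated Hölder/Cauchy–Schwarz bound on `∫ (v_ε − v_0) d(P_ε − P)` holds; consequently,
if `‖v_ε − v_0‖_{L²(P)} → 0`, the quadratic-mean expansion term is `o(ε)`, and the
Hellinger distance is `O(ε)`, then `∫ (v_ε − v_0) d(P_ε − P) = o(ε)`. -/
theorem stmt18 {Z : Type*} [MeasurableSpace Z] (lam : Measure Z) [SigmaFinite lam]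
    (P : Measure Z) [IsProbabilityMeasure P] (hP : P ≪ lam)
    (Pe : ℝ → Measure Z) [∀ ε, IsProbabilityMeasure (Pe ε)] (hPe : ∀ ε, Pe ε ≪ lam)
    (s : Z → ℝ) (hsmeas : Measurable s) (hs : MemLp s 2 P) (hsmean : ∫ z, s z ∂P = 0)
    (v : ℝ → Z → ℝ) (hvmeas : ∀ ε, Measurable (v ε)) (c : ℝ) (hc : 0 ≤ c)
    (ε₀ : ℝ) (hε₀ : 0 < ε₀)
    (hbd : ∀ ε ∈ Set.Icc (0:ℝ) ε₀, ∀ᵐ z ∂lam, |v ε z| ≤ c) :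
    -- the quantitative second-order bound
    (∀ ε ∈ Set.Ioc (0:ℝ) ε₀,
        |(∫ z, (v ε z - v 0 z) ∂(Pe ε)) - ∫ z, (v ε z - v 0 z) ∂P|
          ≤ ε * |∫ z, (v ε z - v 0 z) * s z ∂P|
            + 2 * c * ∫ z, (Real.sqrt ((Pe ε).rnDeriv lam z).toReal
                - Real.sqrt (P.rnDeriv lam z).toReal) ^ 2 ∂lam
            + 2 * Real.sqrt (∫ z, (v ε z - v 0 z) ^ 2 ∂P)
              * Real.sqrt (∫ z, (Real.sqrt ((Pe ε).rnDeriv lam z).toReal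
                  - Real.sqrt (P.rnDeriv lam z).toReal
                  - (ε / 2) * s z * Real.sqrt (P.rnDeriv lam z).toReal) ^ 2 ∂lam)) ∧
    -- the o(ε) consequence under QMD-type conditions
    ((Tendsto (fun ε => ∫ z, (v ε z - v 0 z) ^ 2 ∂P) (𝓝[>] (0:ℝ)) (𝓝 0)) →
     ((fun ε => Real.sqrt (∫ z, (Real.sqrt ((Pe ε).rnDeriv lam z).toReal
          - Real.sqrt (P.rnDeriv lam z).toReal
          - (ε / 2) * s z * Real.sqrt (P.rnDeriv lam z).toReal) ^ 2 ∂lam))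
        =o[𝓝[>] (0:ℝ)] fun ε => ε) →
     ((fun ε => Real.sqrt (∫ z, (Real.sqrt ((Pe ε).rnDeriv lam z).toReal
          - Real.sqrt (P.rnDeriv lam z).toReal) ^ 2 ∂lam))
        =O[𝓝[>] (0:ℝ)] fun ε => ε) →
     (fun ε => (∫ z, (v ε z - v 0 z) ∂(Pe ε)) - ∫ z, (v ε z - v 0 z) ∂P)
        =o[𝓝[>] (0:ℝ)] fun ε => ε) := by
  have hwbd : ∀ ε ∈ Set.Ioc (0:ℝ) ε₀, ∀ᵐ z ∂lam, |v ε z - v 0 z| ≤ 2 * c := by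
    intro ε hε
    filter_upwards [hbd ε ⟨hε.1.le, hε.2⟩, hbd 0 ⟨le_rfl, hε₀.le⟩] with z h1 h2
    calc |v ε z - v 0 z| ≤ |v ε z| + |v 0 z| := abs_sub _ _
      _ ≤ 2 * c := by linarith
  have hmain : ∀ ε ∈ Set.Ioc (0:ℝ) ε₀,
      |(∫ z, (v ε z - v 0 z) ∂(Pe ε)) - ∫ z, (v ε z - v 0 z) ∂P|
          ≤ ε * |∫ z, (v ε z - v 0 z) * s z ∂P|
            + 2 * c * ∫ z, (Real.sqrt ((Pe ε).rnDeriv lam z).toReal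
                - Real.sqrt (P.rnDeriv lam z).toReal) ^ 2 ∂lam
            + 2 * Real.sqrt (∫ z, (v ε z - v 0 z) ^ 2 ∂P)
              * Real.sqrt (∫ z, (Real.sqrt ((Pe ε).rnDeriv lam z).toReal
                  - Real.sqrt (P.rnDeriv lam z).toReal
                  - (ε / 2) * s z * Real.sqrt (P.rnDeriv lam z).toReal) ^ 2 ∂lam) := by
    intro ε hε
    exact key_bound lam P hP (Pe ε) (hPe ε) s hsmeas hs (fun z => v ε z - v 0 z)
      ((hvmeas ε).sub (hvmeas 0)) (2 * c) (by positivity) (hwbd ε hε) ε hε.1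
  refine ⟨hmain, fun h1 h2 h3 => ?_⟩
  have hmem : ∀ᶠ ε in 𝓝[>] (0:ℝ), ε ∈ Set.Ioc (0:ℝ) ε₀ :=
    Ioc_mem_nhdsGT hε₀
  -- `√(∫ w² dP) → 0`
  have hB0 : Tendsto (fun ε => Real.sqrt (∫ z, (v ε z - v 0 z) ^ 2 ∂P))
      (𝓝[>] (0:ℝ)) (𝓝 0) := by
    have := (Real.continuous_sqrt.tendsto 0).comp h1
    simpa [Function.comp_def] using this
  -- `|∫ w s dP| → 0`
  have hA : Tendsto (fun ε => |∫ z, (v ε z - v 0 z) * s z ∂P|) (𝓝[>] (0:ℝ)) (𝓝 0) := by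
    have hle : ∀ᶠ ε in 𝓝[>] (0:ℝ), |∫ z, (v ε z - v 0 z) * s z ∂P|
        ≤ Real.sqrt (∫ z, (v ε z - v 0 z) ^ 2 ∂P) * Real.sqrt (∫ z, s z ^ 2 ∂P) := by
      filter_upwards [hmem] with ε hε
      have wP : MemLp (fun z => v ε z - v 0 z) 2 P := by
        refine MemLp.of_bound ((hvmeas ε).sub (hvmeas 0)).aestronglyMeasurable (2 * c) ?_
        filter_upwards [hP.ae_le (hwbd ε hε)] with z hz
        rwa [Real.norm_eq_abs]
      exact aux_cs wP hs
    refine squeeze_zero' (Filter.Eventually.of_forall fun ε => abs_nonneg _) hle ?_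
    simpa using hB0.mul_const (Real.sqrt (∫ z, s z ^ 2 ∂P))
  have o1 : (fun ε => ε * |∫ z, (v ε z - v 0 z) * s z ∂P|)
      =o[𝓝[>] (0:ℝ)] fun ε => ε := by
    have := (isBigO_refl (fun ε : ℝ => ε) (𝓝[>] (0:ℝ))).mul_isLittleO
      ((isLittleO_one_iff ℝ).mpr hA)
    simpa using this
  have hεo1 : (fun ε : ℝ => ε) =o[𝓝[>] (0:ℝ)] fun _ => (1:ℝ) :=
    (isLittleO_one_iff ℝ).mpr (tendsto_id.mono_left nhdsWithin_le_nhds)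
  have hsq : (fun ε : ℝ => ε * ε) =o[𝓝[>] (0:ℝ)] fun ε => ε := by
    simpa using (isBigO_refl (fun ε : ℝ => ε) (𝓝[>] (0:ℝ))).mul_isLittleO hεo1
  have o2 : (fun ε => 2 * c * ∫ z, (Real.sqrt ((Pe ε).rnDeriv lam z).toReal
      - Real.sqrt (P.rnDeriv lam z).toReal) ^ 2 ∂lam) =o[𝓝[>] (0:ℝ)] fun ε => ε := by
    have hH : (fun ε => ∫ z, (Real.sqrt ((Pe ε).rnDeriv lam z).toReal
        - Real.sqrt (P.rnDeriv lam z).toReal) ^ 2 ∂lam) =O[𝓝[>] (0:ℝ)] fun ε => ε * ε := by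
      refine (h3.mul h3).congr' (Filter.Eventually.of_forall fun ε => ?_) EventuallyEq.rfl
      exact Real.mul_self_sqrt (integral_nonneg fun z => sq_nonneg _)
    exact (hH.trans_isLittleO hsq).const_mul_left (2 * c)
  have o3 : (fun ε => 2 * Real.sqrt (∫ z, (v ε z - v 0 z) ^ 2 ∂P)
      * Real.sqrt (∫ z, (Real.sqrt ((Pe ε).rnDeriv lam z).toReal
          - Real.sqrt (P.rnDeriv lam z).toReal
          - (ε / 2) * s z * Real.sqrt (P.rnDeriv lam z).toReal) ^ 2 ∂lam))
      =o[𝓝[>] (0:ℝ)] fun ε => ε := by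
    have hBO : (fun ε => Real.sqrt (∫ z, (v ε z - v 0 z) ^ 2 ∂P))
        =O[𝓝[>] (0:ℝ)] fun _ => (1:ℝ) := ((isLittleO_one_iff ℝ).mpr hB0).isBigO
    have := (hBO.mul_isLittleO h2).const_mul_left 2
    refine this.congr' (Filter.Eventually.of_forall fun ε => by ring)
      (Filter.Eventually.of_forall fun ε => one_mul ε)
  have hg : (fun ε => (∫ z, (v ε z - v 0 z) ∂(Pe ε)) - ∫ z, (v ε z - v 0 z) ∂P)
      =O[𝓝[>] (0:ℝ)] (fun ε => ε * |∫ z, (v ε z - v 0 z) * s z ∂P|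
        + 2 * c * ∫ z, (Real.sqrt ((Pe ε).rnDeriv lam z).toReal
            - Real.sqrt (P.rnDeriv lam z).toReal) ^ 2 ∂lam
        + 2 * Real.sqrt (∫ z, (v ε z - v 0 z) ^ 2 ∂P)
          * Real.sqrt (∫ z, (Real.sqrt ((Pe ε).rnDeriv lam z).toReal
              - Real.sqrt (P.rnDeriv lam z).toReal
              - (ε / 2) * s z * Real.sqrt (P.rnDeriv lam z).toReal) ^ 2 ∂lam)) := by
    refine IsBigO.of_bound' ?_
    filter_upwards [hmem] with ε hε
    rw [Real.norm_eq_abs, Real.norm_eq_abs]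
    exact (hmain ε hε).trans (le_abs_self _)
  exact hg.trans_isLittleO ((o1.add o2).add o3)

end
end

section
/- Backpropagation computes the efficient influence operator: let ψ : M → W_ψ be expressed as a composition h_1 = θ_1(P, h_{pa(1)}), …, h_k = θ_k(P, h_{pa(k)}), ψ(P) = h_k, where each θ_j : M × U_j → V_j ⊆ W_j is totally pathwise differentiable at (P, h_{pa(j)}) with adjoint θ̇*_{j,P,h_{pa(j)}} : W_j → Ṁ_P ⊕ (⊕_{i∈pa(j)} Ẇ_i), and pa(j) ⊆ {1,…,j−1}. Initialize f_0 = 0 ∈ L²(P), f_1 = ⋯ = f_{k−1} = 0 in W_1,…,W_{k−1}, and fix f_k ∈ W_ψ. For j = k down to 1, update (f_0, f_{pa(j)}) += θ̇*_{j,P,h_{pa(j)}}(f_j). Then ψ is pathwise differentiable at P and the final value of f_0 equals ψ̇*_P(f_k), the efficient influence operator of ψ at P applied to f_k. -/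
open MeasureTheory Filter Asymptotics Topology RealInnerProductSpace

noncomputable section
set_option synthInstance.maxHeartbeats 400000

/-- A path `p` in `U` approaching `u` with direction `t`. -/
def ApproachesAlong {T : Type*} [NormedAddCommGroup T] [NormedSpace ℝ T]
    (U : Set T) (u t : T) (p : ℝ → T) : Prop :=
  (∀ ε ∈ Set.Icc (0:ℝ) 1, p ε ∈ U) ∧
    (fun ε => p ε - u - ε • t) =o[𝓝[>] (0:ℝ)] fun ε => ε

/-- A quadratic-mean-differentiable submodel of `M` through `P` with score `s`. -/
def IsQMDPath {Z : Type*} [MeasurableSpace Z] (M : Set (Measure Z)) (P : Measure Z)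
    (s : Z → ℝ) (Q : ℝ → Measure Z) : Prop :=
  Q 0 = P ∧ (∀ ε ∈ Set.Icc (0:ℝ) 1, Q ε ∈ M) ∧
  ∃ μ : Measure Z, SigmaFinite μ ∧ P ≪ μ ∧ (∀ ε ∈ Set.Icc (0:ℝ) 1, Q ε ≪ μ) ∧
    (fun ε => (eLpNorm (fun z =>
        Real.sqrt ((Q ε).rnDeriv μ z).toReal - Real.sqrt (P.rnDeriv μ z).toReal
          - (ε / 2) * s z * Real.sqrt (P.rnDeriv μ z).toReal) 2 μ).toReal)
      =o[𝓝[>] (0:ℝ)] fun ε => ε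

variable {Z : Type*} [MeasurableSpace Z] {k : ℕ} {W : Fin (k + 1) → Type*}
  [∀ j, NormedAddCommGroup (W j)] [∀ j, InnerProductSpace ℝ (W j)]
  [∀ j, CompleteSpace (W j)]

instance : CompleteSpace (PiLp 2 W) :=
  inferInstance

/-- One step of the backward pass (reverse-mode automatic differentiation): given the
partial adjoints `Dν j` (distribution part) and `Dζ j` (Hilbert part) of the `j`-th
primitive, augment the state `(f₀, f)` by the adjoint of the `j`-th differential applied
to the current cotangent `f j`. -/
def backpropStep (P : Measure Z)
    (Dν : ∀ j, Lp ℝ 2 P →L[ℝ] W j) (Dζ : ∀ j, PiLp 2 W →L[ℝ] W j)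
    (j : Fin (k + 1)) (st : (Lp ℝ 2 P) × PiLp 2 W) : (Lp ℝ 2 P) × PiLp 2 W :=
  (st.1 + (Dν j).adjoint (st.2 j), st.2 + (Dζ j).adjoint (st.2 j))

/-- The backward pass: initialize `f₀ = 0`, `f` zero except `f_k = fk`, and process the
primitives in the order `j = k, k−1, …, 0`, each time augmenting `(f₀, f_{pa(j)})` by the
adjoint of the `j`-th differential applied to `f j`.  Returns the final `(f₀, f)`. -/
def backprop (P : Measure Z)
    (Dν : ∀ j, Lp ℝ 2 P →L[ℝ] W j) (Dζ : ∀ j, PiLp 2 W →L[ℝ] W j)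
    (fk : W (Fin.last k)) : (Lp ℝ 2 P) × PiLp 2 W :=
  (List.finRange (k + 1)).reverse.foldl (fun st j => backpropStep P Dν Dζ j st)
    (0, (WithLp.equiv 2 (∀ j, W j)).symm
      (Function.update (fun _ => 0) (Fin.last k) fk))

/-- The forward differential of the composition, coordinate by coordinate, defined by
well-founded recursion. -/
def Dcoord (P : Measure Z) (Dν : ∀ j, Lp ℝ 2 P →L[ℝ] W j)
    (Dζ : ∀ j, PiLp 2 W →L[ℝ] W j) : ∀ j : Fin (k + 1), Lp ℝ 2 P →L[ℝ] W j :=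
  fun j => Dν j + (Dζ j).comp
    ((PiLp.continuousLinearEquiv 2 ℝ W).symm.toContinuousLinearMap.comp
      (ContinuousLinearMap.pi fun i => if _ : i < j then Dcoord P Dν Dζ i else 0))
termination_by j => j.val
decreasing_by exact ‹i < j›

theorem Dcoord_apply (P : Measure Z) (Dν : ∀ j, Lp ℝ 2 P →L[ℝ] W j)
    (Dζ : ∀ j, PiLp 2 W →L[ℝ] W j) (j : Fin (k + 1)) (s : Lp ℝ 2 P) :
    Dcoord P Dν Dζ j s = Dν j s + Dζ j ((PiLp.continuousLinearEquiv 2 ℝ W).symm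
      (fun i => if _ : i < j then Dcoord P Dν Dζ i s else 0)) := by
  rw [Dcoord]
  have harg : ((ContinuousLinearMap.pi fun i =>
        if _ : i < j then Dcoord P Dν Dζ i else 0) s)
      = fun i => if _ : i < j then Dcoord P Dν Dζ i s else 0 := by
    funext i
    rw [ContinuousLinearMap.pi_apply]
    split <;> simp
  simp only [ContinuousLinearMap.add_apply, ContinuousLinearMap.comp_apply,
    ContinuousLinearEquiv.coe_coe, harg]

/-- backpropagation computes the efficient influence operator. Suppose
`ψ(P') = h_{P'} (last)` where the forward values `h_{P'}` satisfy the compositional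
recursion `h_{P'} j = θ j P' h_{P'}` with each primitive `θ j` depending only on the
coordinates in `pa j ⊆ {i | i < j}` and taking values in `V j`, and each `θ j` is totally
pathwise differentiable at `(P, h_P)` with differential `(s,t) ↦ Dν j s + Dζ j t`
(the Hilbert part also depending only on the `pa j` coordinates).  Then `ψ` is pathwise
differentiable at `P` and for every `fk`, the first component of the backward pass equals
`ψ̇*_P(fk)`, the efficient influence operator applied to `fk`. -/
theorem stmt19 (M : Set (Measure Z)) (P : Measure Z) [IsProbabilityMeasure P]
    (hPM : P ∈ M)
    (pa : Fin (k + 1) → Finset (Fin (k + 1))) (hpa : ∀ j, ∀ i ∈ pa j, i < j)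
    (V : ∀ j, Set (W j))
    (θ : ∀ j : Fin (k + 1), Measure Z → PiLp 2 W → W j)
    -- each primitive depends only on the coordinates of its parents
    (hdep : ∀ j (P' : Measure Z) (x y : PiLp 2 W),
        (∀ i ∈ pa j, x i = y i) → θ j P' x = θ j P' y)
    -- forward values: the composition defining ψ
    (h : Measure Z → PiLp 2 W)
    (hforward : ∀ P' ∈ M, ∀ j, h P' j = θ j P' (h P'))
    (hV : ∀ P' ∈ M, ∀ j, h P' j ∈ V j)
    -- differentials of the primitives at (P, h P)
    (Dν : ∀ j, Lp ℝ 2 P →L[ℝ] W j) (Dζ : ∀ j, PiLp 2 W →L[ℝ] W j)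
    (hDζdep : ∀ j (x y : PiLp 2 W), (∀ i ∈ pa j, x i = y i) → Dζ j x = Dζ j y)
    -- total pathwise differentiability of each primitive at (P, h P)
    (htotal : ∀ j (s : Lp ℝ 2 P) (Q : ℝ → Measure Z), IsQMDPath M P (⇑s) Q →
        ∀ (t : PiLp 2 W) (p : ℝ → PiLp 2 W),
          ApproachesAlong {x : PiLp 2 W | ∀ i ∈ pa j, x i ∈ V i} (h P) t p →
          (fun ε => θ j (Q ε) (p ε) - θ j P (h P) - ε • (Dν j s + Dζ j t))
            =o[𝓝[>] (0:ℝ)] fun ε => ε) :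
    -- ψ is pathwise differentiable at P and backpropagation returns its
    -- efficient influence operator
    ∃ Dψ : Lp ℝ 2 P →L[ℝ] W (Fin.last k),
      (∀ (s : Lp ℝ 2 P) (Q : ℝ → Measure Z), IsQMDPath M P (⇑s) Q →
          (fun ε => h (Q ε) (Fin.last k) - h P (Fin.last k) - ε • Dψ s)
            =o[𝓝[>] (0:ℝ)] fun ε => ε) ∧
      ∀ fk : W (Fin.last k), Dψ.adjoint fk = (backprop P Dν Dζ fk).1 := by
  classical
  set D := Dcoord P Dν Dζ with hDdef
  refine ⟨D (Fin.last k), ?_, ?_⟩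
  · -- forward differentiability
    intro s Q hQ
    suffices Hfwd : ∀ j : Fin (k + 1),
        (fun ε => h (Q ε) j - h P j - ε • D j s) =o[𝓝[>] (0:ℝ)] fun ε => ε from
      Hfwd (Fin.last k)
    have key : ∀ n : ℕ, ∀ j : Fin (k + 1), j.val < n →
        (fun ε => h (Q ε) j - h P j - ε • D j s) =o[𝓝[>] (0:ℝ)] fun ε => ε := by
      intro n
      induction n with
      | zero => exact fun j hj => absurd hj (Nat.not_lt_zero _)
      | succ n IH =>
        intro j hj
        have IH2 : ∀ i : Fin (k + 1), i < j →
            (fun ε => h (Q ε) i - h P i - ε • D i s) =o[𝓝[>] (0:ℝ)] fun ε => ε := by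
          intro i hi
          exact IH i (by omega)
        set p : ℝ → PiLp 2 W := fun ε => (PiLp.continuousLinearEquiv 2 ℝ W).symm
          (fun i => if i < j then h (Q ε) i else h P i) with hp
        set t : PiLp 2 W := (PiLp.continuousLinearEquiv 2 ℝ W).symm
          (fun i => if _ : i < j then D i s else 0) with ht
        have hpcoord : ∀ ε i, p ε i = if i < j then h (Q ε) i else h P i := by
          intro ε i; rfl
        have htcoord : ∀ i, t i = if _ : i < j then D i s else 0 := by
          intro i; rfl
        have hAA : ApproachesAlong {x : PiLp 2 W | ∀ i ∈ pa j, x i ∈ V i} (h P) t p := by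
          constructor
          · intro ε hε i hi
            have hij : i < j := hpa j i hi
            have : p ε i = h (Q ε) i := by rw [hpcoord, if_pos hij]
            rw [this]
            exact hV (Q ε) (hQ.2.1 ε hε) i
          · have hcoord : ∀ i, (fun ε => (p ε - h P - ε • t) i) =o[𝓝[>] (0:ℝ)]
                fun ε => ε := by
              intro i
              by_cases hij : i < j
              · have : (fun ε => (p ε - h P - ε • t) i)
                    = fun ε => h (Q ε) i - h P i - ε • D i s := by
                  funext ε
                  simp only [PiLp.sub_apply, PiLp.smul_apply, hpcoord, htcoord,
                    if_pos hij, dif_pos hij]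
                rw [this]
                exact IH2 i hij
              · have : (fun ε => (p ε - h P - ε • t) i) = fun _ => (0 : W i) := by
                  funext ε
                  simp only [PiLp.sub_apply, PiLp.smul_apply, hpcoord, htcoord,
                    if_neg hij, dif_neg hij, smul_zero, sub_zero, sub_self]
                rw [this]
                exact isLittleO_zero _ _
            have hpi : (fun ε => (PiLp.continuousLinearEquiv 2 ℝ W)
                (p ε - h P - ε • t)) =o[𝓝[>] (0:ℝ)] fun ε => ε :=
              isLittleO_pi.mpr hcoord
            have hO := ((PiLp.continuousLinearEquiv 2 ℝ W).symm.toContinuousLinearMap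
              ).isBigO_comp (fun ε => (PiLp.continuousLinearEquiv 2 ℝ W)
                (p ε - h P - ε • t)) (𝓝[>] (0:ℝ))
            have := hO.trans_isLittleO hpi
            simpa only [ContinuousLinearEquiv.coe_coe,
              ContinuousLinearEquiv.symm_apply_apply] using this
        have hmain := htotal j s Q hQ t p hAA
        have hev : (fun ε => θ j (Q ε) (p ε) - θ j P (h P) - ε • (Dν j s + Dζ j t))
            =ᶠ[𝓝[>] (0:ℝ)] fun ε => h (Q ε) j - h P j - ε • D j s := by
          filter_upwards [Ioc_mem_nhdsGT_of_mem
            (Set.mem_Ico.mpr ⟨le_refl (0:ℝ), one_pos⟩)] with ε hε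
          have hQM : Q ε ∈ M := hQ.2.1 ε ⟨hε.1.le, hε.2⟩
          have h1 : θ j (Q ε) (p ε) = h (Q ε) j := by
            rw [hforward (Q ε) hQM j]
            exact hdep j (Q ε) (p ε) (h (Q ε))
              (fun i hi => by rw [hpcoord, if_pos (hpa j i hi)])
          have h2 : θ j P (h P) = h P j := (hforward P hPM j).symm
          have h3 : Dν j s + Dζ j t = D j s := (Dcoord_apply P Dν Dζ j s).symm
          rw [h1, h2, h3]
        exact hmain.congr' hev (EventuallyEq.refl _ _)
    exact fun j => key (k + 1) j j.isLt
  · -- backprop computes the adjoint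
    intro fk
    set g : Fin (k + 1) → (Lp ℝ 2 P × PiLp 2 W) → (Lp ℝ 2 P × PiLp 2 W) :=
      fun j st => backpropStep P Dν Dζ j st with hg
    set init : Lp ℝ 2 P × PiLp 2 W :=
      (0, (WithLp.equiv 2 (∀ j, W j)).symm
        (Function.update (fun _ => 0) (Fin.last k) fk)) with hinit
    set T : ℕ → Lp ℝ 2 P × PiLp 2 W :=
      fun m => List.foldr g init ((List.finRange (k + 1)).drop m) with hTdef
    have hT0 : backprop P Dν Dζ fk = T 0 := by
      rw [backprop, List.foldl_reverse]
      rfl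
    have hTstep : ∀ m (hm : m < k + 1), T m = g ⟨m, hm⟩ (T (m + 1)) := by
      intro m hm
      have hlen : m < (List.finRange (k + 1)).length := by simpa using hm
      simp only [hTdef]
      rw [List.drop_eq_getElem_cons hlen]
      simp only [List.foldr_cons, List.getElem_finRange]
      rfl
    have inv : ∀ d, d ≤ k + 1 → ∀ s : Lp ℝ 2 P,
        ⟪(T (k + 1 - d)).1, s⟫ + ∑ i ∈ Finset.univ.filter
            (fun i : Fin (k + 1) => i.val < k + 1 - d), ⟪(T (k + 1 - d)).2 i, D i s⟫
          = ⟪fk, D (Fin.last k) s⟫ := by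
      intro d
      induction d with
      | zero =>
        intro _ s
        have hTtop : T (k + 1) = init := by
          simp only [hTdef]
          rw [List.drop_eq_nil_of_le (by simp)]
          rfl
        simp only [Nat.sub_zero, hTtop, hinit]
        rw [inner_zero_left, zero_add]
        have hfilter : Finset.univ.filter (fun i : Fin (k + 1) => i.val < k + 1)
            = Finset.univ := by
          apply Finset.filter_true_of_mem
          intro i _
          exact i.isLt
        rw [hfilter]
        rw [Finset.sum_eq_single (Fin.last k)]
        · simp
        · intro i _ hi
          have : (WithLp.equiv 2 (∀ j, W j)).symm
              (Function.update (fun _ => 0) (Fin.last k) fk) i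
              = (0 : W i) := by
            simp [Function.update_of_ne hi]
          rw [this, inner_zero_left]
        · intro habs
          exact absurd (Finset.mem_univ _) habs
      | succ d IHd =>
        intro hd s
        have hdk : d ≤ k + 1 := Nat.le_of_succ_le hd
        have hm : k + 1 - (d + 1) < k + 1 := by omega
        set m : ℕ := k + 1 - (d + 1) with hmdef
        have hmsucc : m + 1 = k + 1 - d := by omega
        set jm : Fin (k + 1) := ⟨m, hm⟩ with hjm
        have hstep := hTstep m hm
        set st := T (m + 1) with hst
        set w : W jm := st.2 jm with hw
        have hIH := IHd hdk s
        rw [← hmsucc] at hIH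
        -- split off the `jm` term in the IH sum
        have hins : Finset.univ.filter (fun i : Fin (k + 1) => i.val < m + 1)
            = insert jm (Finset.univ.filter (fun i : Fin (k + 1) => i.val < m)) := by
          ext i
          simp only [Finset.mem_filter, Finset.mem_univ, true_and, Finset.mem_insert]
          constructor
          · intro hi
            by_cases h' : (i : ℕ) < m
            · exact Or.inr h'
            · refine Or.inl (Fin.ext ?_)
              have hjmval : (jm : ℕ) = m := rfl
              omega
          · rintro (rfl | h')
            · exact Nat.lt_succ_self m
            · exact Nat.lt_succ_of_lt h' 
        have hnotmem : jm ∉ Finset.univ.filter (fun i : Fin (k + 1) => i.val < m) := by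
          simp [hjm]
        rw [hins, Finset.sum_insert hnotmem] at hIH
        -- now compute the LHS for T m
        rw [hstep]
        have hg1 : (g jm st).1 = st.1 + (Dν jm).adjoint w := rfl
        have hg2 : ∀ i, (g jm st).2 i = st.2 i + ((Dζ jm).adjoint w) i := by
          intro i; rfl
        rw [hg1]
        have hsum : ∑ i ∈ Finset.univ.filter (fun i : Fin (k + 1) => i.val < m),
            ⟪(g jm st).2 i, D i s⟫
            = ∑ i ∈ Finset.univ.filter (fun i : Fin (k + 1) => i.val < m),
                ⟪st.2 i, D i s⟫
              + ∑ i ∈ Finset.univ.filter (fun i : Fin (k + 1) => i.val < m),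
                  ⟪((Dζ jm).adjoint w) i, D i s⟫ := by
          rw [← Finset.sum_add_distrib]
          apply Finset.sum_congr rfl
          intro i _
          rw [hg2 i, inner_add_left]
        rw [hsum, inner_add_left]
        -- key adjoint computation
        set u : PiLp 2 W := (PiLp.continuousLinearEquiv 2 ℝ W).symm
          (fun i => if _ : i < jm then D i s else 0) with hu
        have hucoord : ∀ i, u i = if _ : i < jm then D i s else 0 := fun i => rfl
        have hDjm : D jm s = Dν jm s + Dζ jm u := by
          rw [hDdef]; exact Dcoord_apply P Dν Dζ jm s
        have hkey : ⟪(Dν jm).adjoint w, s⟫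
            + ∑ i ∈ Finset.univ.filter (fun i : Fin (k + 1) => i.val < m),
                ⟪((Dζ jm).adjoint w) i, D i s⟫
            = ⟪w, D jm s⟫ := by
          rw [hDjm, inner_add_right, ContinuousLinearMap.adjoint_inner_left]
          congr 1
          rw [← ContinuousLinearMap.adjoint_inner_left (Dζ jm), PiLp.inner_apply,
            Finset.sum_filter]
          apply Finset.sum_congr rfl
          intro i _
          by_cases hij : (i : ℕ) < m
          · rw [if_pos hij, hucoord, dif_pos (show i < jm from hij)]
          · rw [if_neg hij, hucoord, dif_neg (show ¬ i < jm from hij), inner_zero_right]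
        calc ⟪st.1, s⟫ + ⟪(Dν jm).adjoint w, s⟫
              + (∑ i ∈ Finset.univ.filter (fun i : Fin (k + 1) => i.val < m),
                  ⟪st.2 i, D i s⟫
                + ∑ i ∈ Finset.univ.filter (fun i : Fin (k + 1) => i.val < m),
                    ⟪((Dζ jm).adjoint w) i, D i s⟫)
            = ⟪st.1, s⟫ + (⟪w, D jm s⟫
              + ∑ i ∈ Finset.univ.filter (fun i : Fin (k + 1) => i.val < m),
                  ⟪st.2 i, D i s⟫) := by rw [← hkey]; ring
          _ = ⟪fk, D (Fin.last k) s⟫ := hIH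
    have hfin := inv (k + 1) le_rfl
    simp only [Nat.sub_self] at hfin
    have hempty : Finset.univ.filter (fun i : Fin (k + 1) => i.val < 0) = ∅ := by
      apply Finset.filter_false_of_mem
      intro i _
      exact Nat.not_lt_zero _
    apply ext_inner_right ℝ
    intro s
    rw [ContinuousLinearMap.adjoint_inner_left, hT0]
    have := hfin s
    rw [hempty, Finset.sum_empty, add_zero] at this
    rw [this]

end
end
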